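/- arXiv:2503.18411 — 8 statements merged into one kernel-verified Lean document; each statement's English description precedes it below -/
import Mathlib

section
/- There exists a constant C > 0 such that for all a, b ∈ ℝ³ with aᵢ < bᵢ for i = 1,2,3, and every function f : ℝ³ → ℝ that is continuously differentiable on a neighborhood of the closure of the rectangle R(a,b), one has ∫_{R(a,b)} |f(y) − f_{R(a,b)}| dy ≤ C |b − a| ∫_{R(a,b)} |∇f(y)| dy. The constant C is independent of a and b (in particular of the aspect ratio of the rectangle). -/
/-!
Along the segment from `y` to `x` one has `|f x - f y| ≤ |x - y| ∫₀¹ |∇f((1-t)y + tx)| dt`, and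
`|x - y| ≤ diam R`. Averaging over `y ∈ R` and integrating over `x ∈ R` leaves, for each `t`, the
double integral `∫_R ∫_R |∇f((1-t)y + tx)| dy dx`. For `t ≤ 1/2` integrate first in `y`, for
`t ≥ 1/2` first in `x`: the inner integral is then over a copy of `R` dilated by a factor `≥ 1/2`,
so it is at most `2ᵈ ∫_R |∇f|`. This gives the constant `2ᵈ diam R` for every bounded open convex
set, whatever its shape.
-/

open MeasureTheory

/-- The open rectangle `R(a,b) = (a₁,b₁)×(a₂,b₂)×(a₃,b₃)` in ℝ³ with sides parallel to the
coordinate axes. -/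
def rect (a b : EuclideanSpace ℝ (Fin 3)) : Set (EuclideanSpace ℝ (Fin 3)) :=
  {x | ∀ i, x i ∈ Set.Ioo (a i) (b i)}

open Set Metric Module AffineMap
open scoped ENNReal

section

variable {E F : Type*} [NormedAddCommGroup E] [NormedSpace ℝ E]
  [NormedAddCommGroup F] [NormedSpace ℝ F] [CompleteSpace F]

theorem enorm_sub_le_lintegral_fderiv_lineMap {s : Set E} (hs : IsOpen s) (hsc : Convex ℝ s)
    {f : E → F} (hf : ContDiffOn ℝ 1 f s) {x y : E} (hx : x ∈ s) (hy : y ∈ s) :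
    ‖f x - f y‖ₑ ≤ ‖x - y‖ₑ * ∫⁻ t in Ioc (0 : ℝ) 1, ‖fderiv ℝ f (lineMap y x t)‖ₑ := by
  have hmem : ∀ t ∈ uIcc (0 : ℝ) 1, lineMap y x t ∈ s := fun t ht =>
    hsc.lineMap_mem hy hx (by rwa [uIcc_of_le zero_le_one] at ht)
  have hderiv : ∀ t ∈ uIcc (0 : ℝ) 1,
      HasDerivAt (fun t => f (lineMap y x t)) (fderiv ℝ f (lineMap y x t) (x - y)) t :=
    fun t ht => ((hf.differentiableOn one_ne_zero _ (hmem t ht)).differentiableAt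
      (hs.mem_nhds (hmem t ht))).hasFDerivAt.comp_hasDerivAt t hasDerivAt_lineMap
  have hcont : ContinuousOn (fun t : ℝ => fderiv ℝ f (lineMap y x t) (x - y)) (uIcc 0 1) :=
    ((hf.continuousOn_fderiv_of_isOpen hs le_rfl).comp lineMap_continuous.continuousOn
      hmem).clm_apply continuousOn_const
  have hftc : f x - f y = ∫ t in Ioc (0 : ℝ) 1, fderiv ℝ f (lineMap y x t) (x - y) := by
    rw [← intervalIntegral.integral_of_le zero_le_one,
      intervalIntegral.integral_eq_sub_of_hasDerivAt hderiv hcont.intervalIntegrable,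
      lineMap_apply_one, lineMap_apply_zero]
  calc ‖f x - f y‖ₑ
      ≤ ∫⁻ t in Ioc (0 : ℝ) 1, ‖fderiv ℝ f (lineMap y x t) (x - y)‖ₑ :=
        hftc ▸ enorm_integral_le_lintegral_enorm _
    _ ≤ ∫⁻ t in Ioc (0 : ℝ) 1, ‖fderiv ℝ f (lineMap y x t)‖ₑ * ‖x - y‖ₑ :=
        lintegral_mono fun t => ContinuousLinearMap.le_opENorm _ _
    _ = ‖x - y‖ₑ * ∫⁻ t in Ioc (0 : ℝ) 1, ‖fderiv ℝ f (lineMap y x t)‖ₑ := by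
        rw [lintegral_mul_const' _ _ enorm_ne_top, mul_comm]

theorem enorm_sub_setAverage_le {α : Type*} [MeasurableSpace α] {ν : Measure α} {s : Set α}
    (hν₀ : ν s ≠ 0) (hν : ν s ≠ ∞) {f : α → F} (hfi : IntegrableOn f s ν) (x : α) :
    ‖f x - ⨍ y in s, f y ∂ν‖ₑ ≤ (ν s)⁻¹ * ∫⁻ y in s, ‖f x - f y‖ₑ ∂ν := by
  have hν' : ν.real s ≠ 0 := ENNReal.toReal_ne_zero.2 ⟨hν₀, hν⟩
  have hmean : f x - ⨍ y in s, f y ∂ν = ⨍ y in s, (f x - f y) ∂ν := by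
    rw [setAverage_eq, setAverage_eq, integral_sub (integrableOn_const (C := f x) hν) hfi,
      setIntegral_const, smul_sub, smul_smul, inv_mul_cancel₀ hν', one_smul]
  rw [hmean, setAverage_eq', ← smul_eq_mul, ← lintegral_smul_measure]
  exact enorm_integral_le_lintegral_enorm _

end

section

variable {E : Type*} [NormedAddCommGroup E] [NormedSpace ℝ E] [FiniteDimensional ℝ E]
  [MeasurableSpace E] [BorelSpace E] (μ : Measure E) [μ.IsAddHaarMeasure]

theorem lintegral_comp_add_smul_le {G : E → ℝ≥0∞} (hG : Measurable G) (w : E) {r : ℝ}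
    (hr : 1 / 2 ≤ r) : ∫⁻ z, G (w + r • z) ∂μ ≤ 2 ^ finrank ℝ E * ∫⁻ z, G z ∂μ := by
  have hr0 : 0 < r := by linarith
  have hscale : ENNReal.ofReal |(r ^ finrank ℝ E)⁻¹| ≤ 2 ^ finrank ℝ E := by
    rw [abs_of_pos (by positivity), ← inv_pow, ← ENNReal.ofReal_ofNat,
      ← ENNReal.ofReal_pow zero_le_two]
    gcongr
    rw [inv_le_comm₀ hr0 two_pos]
    linarith
  calc ∫⁻ z, G (w + r • z) ∂μ = ∫⁻ u, G (w + u) ∂(Measure.map (r • ·) μ) :=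
        (lintegral_map (hG.comp (measurable_const_add w)) (measurable_const_smul r)).symm
    _ = ENNReal.ofReal |(r ^ finrank ℝ E)⁻¹| * ∫⁻ u, G u ∂μ := by
        rw [Measure.map_addHaar_smul μ hr0.ne', lintegral_smul_measure,
          lintegral_add_left_eq_self G w, smul_eq_mul]
    _ ≤ 2 ^ finrank ℝ E * ∫⁻ z, G z ∂μ := by gcongr

theorem setLIntegral_setLIntegral_comp_lineMap_le {G : E → ℝ≥0∞} (hG : Measurable G)
    (s : Set E) (t : ℝ) :
    ∫⁻ x in s, ∫⁻ y in s, G (lineMap y x t) ∂μ ∂μ ≤ 2 ^ finrank ℝ E * μ s * ∫⁻ z, G z ∂μ := by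
  rcases le_total t (1 / 2) with ht | ht
  · calc ∫⁻ x in s, ∫⁻ y in s, G (lineMap y x t) ∂μ ∂μ
        ≤ ∫⁻ _ in s, 2 ^ finrank ℝ E * ∫⁻ z, G z ∂μ ∂μ := by
          refine lintegral_mono fun x => (setLIntegral_le_lintegral _ _).trans ?_
          simp_rw [lineMap_apply_module, add_comm _ (t • x)]
          exact lintegral_comp_add_smul_le μ hG _ (by linarith)
      _ = _ := by rw [setLIntegral_const, mul_right_comm]
  · have hmeas : Measurable (Function.uncurry fun x y => G (lineMap y x t)) := by
      simp_rw [lineMap_apply_module]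
      exact hG.comp (by fun_prop)
    calc ∫⁻ x in s, ∫⁻ y in s, G (lineMap y x t) ∂μ ∂μ
        = ∫⁻ y in s, ∫⁻ x in s, G (lineMap y x t) ∂μ ∂μ :=
          lintegral_lintegral_swap hmeas.aemeasurable
      _ ≤ ∫⁻ _ in s, 2 ^ finrank ℝ E * ∫⁻ z, G z ∂μ ∂μ := by
          refine lintegral_mono fun y => (setLIntegral_le_lintegral _ _).trans ?_
          simp_rw [lineMap_apply_module]
          exact lintegral_comp_add_smul_le μ hG _ ht
      _ = _ := by rw [setLIntegral_const, mul_right_comm]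

theorem setLIntegral_setLIntegral_lintegral_comp_lineMap_le {G : E → ℝ≥0∞} (hG : Measurable G)
    (s : Set E) :
    ∫⁻ x in s, ∫⁻ y in s, ∫⁻ t in Ioc (0 : ℝ) 1, G (lineMap y x t) ∂volume ∂μ ∂μ ≤
      2 ^ finrank ℝ E * μ s * ∫⁻ z, G z ∂μ := by
  have hmeas : Measurable fun p : (E × ℝ) × E => G (lineMap p.2 p.1.1 p.1.2) := by
    simp_rw [lineMap_apply_module]
    exact hG.comp (by fun_prop)
  calc ∫⁻ x in s, ∫⁻ y in s, ∫⁻ t in Ioc (0 : ℝ) 1, G (lineMap y x t) ∂volume ∂μ ∂μ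
      = ∫⁻ x in s, ∫⁻ t in Ioc (0 : ℝ) 1, ∫⁻ y in s, G (lineMap y x t) ∂μ ∂volume ∂μ := by
        refine lintegral_congr fun x => lintegral_lintegral_swap ?_
        exact (hmeas.comp (by fun_prop : Measurable fun q : E × ℝ => ((x, q.2), q.1))).aemeasurable
    _ = ∫⁻ t in Ioc (0 : ℝ) 1, ∫⁻ x in s, ∫⁻ y in s, G (lineMap y x t) ∂μ ∂μ :=
        lintegral_lintegral_swap (hmeas.lintegral_prod_right' (ν := μ.restrict s)).aemeasurable
    _ ≤ ∫⁻ t in Ioc (0 : ℝ) 1, 2 ^ finrank ℝ E * μ s * ∫⁻ z, G z ∂μ :=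
        lintegral_mono fun t => setLIntegral_setLIntegral_comp_lineMap_le μ hG s t
    _ = _ := by simp [Real.volume_Ioc]

variable {F : Type*} [NormedAddCommGroup F] [NormedSpace ℝ F] [CompleteSpace F]

theorem setLIntegral_enorm_sub_setAverage_le {s : Set E} (hs : IsOpen s) (hsc : Convex ℝ s)
    (hsb : Bornology.IsBounded s) {f : E → F} (hf : ContDiffOn ℝ 1 f s)
    (hfi : IntegrableOn f s μ) :
    ∫⁻ x in s, ‖f x - ⨍ y in s, f y ∂μ‖ₑ ∂μ ≤
      2 ^ finrank ℝ E * ediam s * ∫⁻ x in s, ‖fderiv ℝ f x‖ₑ ∂μ := by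
  rcases eq_or_ne (μ s) 0 with hμ₀ | hμ₀
  · simp [Measure.restrict_eq_zero.2 hμ₀]
  have hμ : μ s ≠ ∞ := hsb.measure_lt_top.ne
  -- Extending `‖f'‖ₑ` by zero off `s` lets the change of variables run over all of `E`.
  set G := s.indicator fun z => ‖fderiv ℝ f z‖ₑ
  have hG : Measurable G := (measurable_fderiv ℝ f).enorm.indicator hs.measurableSet
  have hpair : ∀ x ∈ s, ∀ y ∈ s,
      ‖f x - f y‖ₑ ≤ ediam s * ∫⁻ t in Ioc (0 : ℝ) 1, G (lineMap y x t) := by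
    intro x hx y hy
    rw [setLIntegral_congr_fun measurableSet_Ioc fun t ht =>
      indicator_of_mem (hsc.lineMap_mem hy hx (Ioc_subset_Icc_self ht)) _]
    refine (enorm_sub_le_lintegral_fderiv_lineMap hs hsc hf hx hy).trans ?_
    gcongr
    rw [← edist_eq_enorm_sub]
    exact edist_le_ediam_of_mem hx hy
  calc ∫⁻ x in s, ‖f x - ⨍ y in s, f y ∂μ‖ₑ ∂μ
      ≤ ∫⁻ x in s, (μ s)⁻¹ *
          ∫⁻ y in s, ediam s * ∫⁻ t in Ioc (0 : ℝ) 1, G (lineMap y x t) ∂volume ∂μ ∂μ := by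
        refine setLIntegral_mono' hs.measurableSet fun x hx =>
          (enorm_sub_setAverage_le hμ₀ hμ hfi x).trans ?_
        gcongr (μ s)⁻¹ * ?_
        exact setLIntegral_mono' hs.measurableSet fun y hy => hpair x hx y hy
    _ = (μ s)⁻¹ * ediam s *
          ∫⁻ x in s, ∫⁻ y in s, ∫⁻ t in Ioc (0 : ℝ) 1, G (lineMap y x t) ∂volume ∂μ ∂μ := by
        simp_rw [lintegral_const_mul' _ _ hsb.ediam_ne_top, ← mul_assoc]
        exact lintegral_const_mul' _ _ (ENNReal.mul_ne_top (ENNReal.inv_ne_top.2 hμ₀)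
          hsb.ediam_ne_top)
    _ ≤ (μ s)⁻¹ * ediam s * (2 ^ finrank ℝ E * μ s * ∫⁻ z, G z ∂μ) := by
        gcongr
        exact setLIntegral_setLIntegral_lintegral_comp_lineMap_le μ hG s
    _ = 2 ^ finrank ℝ E * ediam s * (∫⁻ z, G z ∂μ) * ((μ s)⁻¹ * μ s) := by ring
    _ = 2 ^ finrank ℝ E * ediam s * ∫⁻ x in s, ‖fderiv ℝ f x‖ₑ ∂μ := by
        rw [ENNReal.inv_mul_cancel hμ₀ hμ, mul_one, lintegral_indicator hs.measurableSet]

theorem setIntegral_norm_sub_setAverage_le {s : Set E} (hs : IsOpen s) (hsc : Convex ℝ s)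
    (hsb : Bornology.IsBounded s) {f : E → F} (hf : ContDiffOn ℝ 1 f s)
    (hfi : IntegrableOn f s μ) (hf'i : IntegrableOn (fderiv ℝ f) s μ) :
    ∫ x in s, ‖f x - ⨍ y in s, f y ∂μ‖ ∂μ ≤
      2 ^ finrank ℝ E * diam s * ∫ x in s, ‖fderiv ℝ f x‖ ∂μ := by
  have hfin : 2 ^ finrank ℝ E * ediam s * ∫⁻ x in s, ‖fderiv ℝ f x‖ₑ ∂μ ≠ ∞ :=
    ENNReal.mul_ne_top (ENNReal.mul_ne_top (by simp) hsb.ediam_ne_top) hf'i.2.ne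
  have hm : AEStronglyMeasurable (fun x => f x - ⨍ y in s, f y ∂μ) (μ.restrict s) :=
    hfi.aestronglyMeasurable.sub aestronglyMeasurable_const
  rw [integral_norm_eq_lintegral_enorm hm,
    integral_norm_eq_lintegral_enorm hf'i.aestronglyMeasurable, diam]
  simpa [ENNReal.toReal_mul] using
    ENNReal.toReal_mono hfin (setLIntegral_enorm_sub_setAverage_le μ hs hsc hsb hf hfi)

end

theorem isOpen_rect (a b : EuclideanSpace ℝ (Fin 3)) : IsOpen (rect a b) := by
  have : rect a b = ⋂ i, (fun x : EuclideanSpace ℝ (Fin 3) => x i) ⁻¹' Ioo (a i) (b i) := by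
    ext x; simp [rect]
  rw [this]
  exact isOpen_iInter_of_finite fun i => isOpen_Ioo.preimage (EuclideanSpace.proj i).continuous

theorem convex_rect (a b : EuclideanSpace ℝ (Fin 3)) : Convex ℝ (rect a b) :=
  fun _ hx _ hy _ _ hs ht hst i => convex_Ioo (a i) (b i) (hx i) (hy i) hs ht hst

theorem dist_le_of_mem_rect {a b x y : EuclideanSpace ℝ (Fin 3)} (hx : x ∈ rect a b)
    (hy : y ∈ rect a b) : dist x y ≤ ‖b - a‖ := by
  rw [EuclideanSpace.dist_eq, EuclideanSpace.norm_eq]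
  gcongr with i
  rw [Real.dist_eq, PiLp.sub_apply, Real.norm_eq_abs]
  obtain ⟨hx₁, hx₂⟩ := hx i
  obtain ⟨hy₁, hy₂⟩ := hy i
  exact (abs_sub_le_iff.2 ⟨by linarith, by linarith⟩).trans (le_abs_self _)

theorem isBounded_rect (a b : EuclideanSpace ℝ (Fin 3)) : Bornology.IsBounded (rect a b) :=
  isBounded_iff.2 ⟨_, fun _ hx _ hy => dist_le_of_mem_rect hx hy⟩

theorem diam_rect_le (a b : EuclideanSpace ℝ (Fin 3)) : diam (rect a b) ≤ ‖b - a‖ :=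
  diam_le_of_forall_dist_le (norm_nonneg _) fun _ hx _ hy => dist_le_of_mem_rect hx hy

/-- Poincaré's inequality on rectangles, with a constant independent of the rectangle (in
particular of its aspect ratio): there exists `C > 0` such that for all `a < b` in ℝ³ and every
`f` continuously differentiable on a neighborhood of the closure of `R(a,b)`,
`∫_{R(a,b)} |f(y) − f_{R(a,b)}| dy ≤ C |b − a| ∫_{R(a,b)} |∇f(y)| dy`,
where `f_{R(a,b)}` is the mean value of `f` over `R(a,b)`. -/
theorem stmt_0 :
    ∃ C : ℝ, 0 < C ∧
      ∀ a b : EuclideanSpace ℝ (Fin 3), (∀ i, a i < b i) →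
        ∀ f : EuclideanSpace ℝ (Fin 3) → ℝ,
          (∃ U : Set (EuclideanSpace ℝ (Fin 3)),
            IsOpen U ∧ closure (rect a b) ⊆ U ∧ ContDiffOn ℝ 1 f U) →
          ∫ y in rect a b, |f y - (∫ z in rect a b, f z) / (volume (rect a b)).toReal| ≤
            C * ‖b - a‖ * ∫ y in rect a b, ‖fderiv ℝ f y‖ := by
  refine ⟨2 ^ 3, by norm_num, fun a b _ f ⟨U, hU, hRU, hf⟩ => ?_⟩
  have hcl : IsCompact (closure (rect a b)) := (isBounded_rect a b).isCompact_closure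
  have hfi : IntegrableOn f (rect a b) :=
    ((hf.continuousOn.mono hRU).integrableOn_compact hcl).mono_set subset_closure
  have hf'i : IntegrableOn (fderiv ℝ f) (rect a b) :=
    (((hf.continuousOn_fderiv_of_isOpen hU le_rfl).mono hRU).integrableOn_compact hcl).mono_set
      subset_closure
  have hmean : ⨍ y in rect a b, f y = (∫ z in rect a b, f z) / (volume (rect a b)).toReal := by
    rw [setAverage_eq, smul_eq_mul, inv_mul_eq_div, measureReal_def]
  calc ∫ y in rect a b, |f y - (∫ z in rect a b, f z) / (volume (rect a b)).toReal|
      = ∫ y in rect a b, ‖f y - ⨍ z in rect a b, f z‖ := by simp_rw [hmean, Real.norm_eq_abs]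
    _ ≤ 2 ^ 3 * diam (rect a b) * ∫ y in rect a b, ‖fderiv ℝ f y‖ := by
        simpa using setIntegral_norm_sub_setAverage_le volume (isOpen_rect a b) (convex_rect a b)
          (isBounded_rect a b) (hf.mono (subset_closure.trans hRU)) hfi hf'i
    _ ≤ 2 ^ 3 * ‖b - a‖ * ∫ y in rect a b, ‖fderiv ℝ f y‖ := by
        gcongr
        exact diam_rect_le a b
end

section
/- Let Ω ⊂ ℝ³ be a nonempty bounded open set, let σ ∈ (0, 1/√3), and set r(x) = σ · dist(x, Ωᶜ) for x ∈ Ω. Let φ : ℝ³ → ℝ be a nonnegative measurable function with φ(x) = 0 whenever |x| ≥ 2/3 and ∫_{ℝ³} φ(x) dx = 1. Then for every z ∈ Ω, ∫_Ω r(x)⁻³ φ((x − z)/r(x)) dx ≤ 1/(1 − √3 σ). -/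
/-!
The substitution `y = T x := r(x)⁻¹ • (x - z)`, where `r = σ · dist(·, Ωᶜ)` is `σ`-Lipschitz, has
Jacobian determinant `r(x)⁻ⁿ (1 - Dr(x) (T x))` by the matrix determinant lemma. Wherever
`φ (T x) ≠ 0` we have `‖T x‖ < ρ = 2/3`, so this determinant is at least `r(x)⁻ⁿ (1 - σρ)`, and the
same Lipschitz bound makes `T` injective there. The change of variables formula (with Rademacher's
theorem providing differentiability of `r` almost everywhere) then bounds the integral by
`(1 - σρ)⁻¹ ∫ φ`, and `2/3 ≤ √3`.
-/

open MeasureTheory Module Set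
open scoped NNReal

theorem LinearMap.det_one_add_smulRight {R M : Type*} [CommRing R] [Nontrivial R] [AddCommGroup M]
    [Module R M] [Module.Free R M] [Module.Finite R M] (ℓ : M →ₗ[R] R) (v : M) :
    (1 + ℓ.smulRight v).det = 1 + ℓ v := by
  classical
  let b := Module.finBasis R M
  rw [← LinearMap.det_toMatrix b, map_add, LinearMap.toMatrix_one, LinearMap.toMatrix_smulRight,
    Matrix.vecMulVec_eq Unit, Matrix.det_one_add_replicateCol_mul_replicateRow]
  conv_rhs => rw [← b.sum_repr v, map_sum]
  simp only [dotProduct, Function.comp_apply, map_smul, smul_eq_mul, mul_comm]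

section RescaledOffset

variable {E : Type*} [NormedAddCommGroup E] [NormedSpace ℝ E]

noncomputable def rescaledOffset (r : E → ℝ) (z x : E) : E := (r x)⁻¹ • (x - z)

theorem smul_rescaledOffset {r : E → ℝ} {x : E} (z : E) (hx : r x ≠ 0) :
    r x • rescaledOffset r z x = x - z := by
  rw [rescaledOffset, smul_inv_smul₀ hx]

theorem hasFDerivAt_rescaledOffset {r : E → ℝ} {r' : E →L[ℝ] ℝ} {x : E} (z : E)
    (hr : HasFDerivAt r r' x) (hx : r x ≠ 0) :
    HasFDerivAt (rescaledOffset r z) ((r x)⁻¹ • (1 + (-(r x)⁻¹ • r').smulRight (x - z))) x := by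
  convert ((hasDerivAt_inv hx).comp_hasFDerivAt x hr).smul ((hasFDerivAt_id x).sub_const z) using 1
  · rfl
  ext v
  simp only [smul_add, add_apply, smul_apply, one_apply_eq_self, ContinuousLinearMap.smulRight_apply,
    smul_eq_mul, neg_mul, neg_smul, smul_neg, smul_smul, Function.comp_apply, id_eq,
    ContinuousLinearMap.id_apply, neg_apply, add_right_inj, neg_inj]
  ring_nf

theorem det_fderiv_rescaledOffset [FiniteDimensional ℝ E] {r : E → ℝ} {x : E} (z : E)
    (hr : DifferentiableAt ℝ r x) (hx : r x ≠ 0) :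
    (fderiv ℝ (rescaledOffset r z) x).det =
      (r x ^ finrank ℝ E)⁻¹ * (1 - fderiv ℝ r x (rescaledOffset r z x)) := by
  rw [(hasFDerivAt_rescaledOffset z hr.hasFDerivAt hx).fderiv, ContinuousLinearMap.det,
    ContinuousLinearMap.toLinearMap_smul, LinearMap.det_smul, ContinuousLinearMap.toLinearMap_add,
    ContinuousLinearMap.toLinearMap_one, ContinuousLinearMap.coe_smulRight, LinearMap.det_one_add_smulRight,
    inv_pow]
  congr 1
  simp only [ContinuousLinearMap.toLinearMap_smul, LinearMap.smul_apply, ContinuousLinearMap.coe_coe,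
    map_sub, map_smul, smul_eq_mul, rescaledOffset]
  ring

theorem inv_pow_mul_le_det_fderiv_rescaledOffset [FiniteDimensional ℝ E] {r : E → ℝ} {K : ℝ≥0}
    (hr : LipschitzWith K r) {x z : E} (hrx : DifferentiableAt ℝ r x) (hx : 0 < r x) {ρ : ℝ}
    (hρ : ‖rescaledOffset r z x‖ < ρ) :
    (r x ^ finrank ℝ E)⁻¹ * (1 - K * ρ) ≤ (fderiv ℝ (rescaledOffset r z) x).det := by
  rw [det_fderiv_rescaledOffset z hrx hx.ne']
  have : fderiv ℝ r x (rescaledOffset r z x) ≤ K * ρ :=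
    calc fderiv ℝ r x (rescaledOffset r z x)
        ≤ ‖fderiv ℝ r x‖ * ‖rescaledOffset r z x‖ := (le_abs_self _).trans ((fderiv ℝ r x).le_opNorm _)
      _ ≤ K * ρ := mul_le_mul (norm_fderiv_le_of_lipschitz ℝ hr) hρ.le (norm_nonneg _) K.2
  gcongr

theorem injOn_rescaledOffset {r : E → ℝ} {K : ℝ≥0} (hr : LipschitzWith K r) {ρ : ℝ}
    (hKρ : K * ρ < 1) (z : E) :
    InjOn (rescaledOffset r z) {x | r x ≠ 0 ∧ ‖rescaledOffset r z x‖ < ρ} := by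
  rintro x ⟨hx, hxρ⟩ y ⟨hy, -⟩ hxy
  by_contra hne
  have hdiff : x - y = (r x - r y) • rescaledOffset r z x := by
    rw [sub_smul, smul_rescaledOffset z hx, hxy, smul_rescaledOffset z hy, sub_sub_sub_cancel_right]
  have hpos : 0 < ‖x - y‖ := norm_pos_iff.2 (sub_ne_zero.2 hne)
  have : ‖x - y‖ ≤ K * ‖x - y‖ * ρ :=
    calc ‖x - y‖ = |r x - r y| * ‖rescaledOffset r z x‖ := by rw [hdiff, norm_smul, Real.norm_eq_abs]
      _ ≤ K * ‖x - y‖ * ρ := by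
        gcongr
        simpa [Real.dist_eq, dist_eq_norm] using hr.dist_le_mul x y
  nlinarith

theorem inv_pow_mul_comp_rescaledOffset_le [FiniteDimensional ℝ E] {r : E → ℝ} {K : ℝ≥0}
    (hr : LipschitzWith K r) {ρ : ℝ} (hKρ : K * ρ < 1) {φ : E → ℝ} (hφ0 : ∀ x, 0 ≤ φ x)
    (hφρ : ∀ x, ρ ≤ ‖x‖ → φ x = 0) {x z : E} (hrx : DifferentiableAt ℝ r x) (hx : 0 < r x) :
    (r x ^ finrank ℝ E)⁻¹ * φ (rescaledOffset r z x) ≤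
      (1 - K * ρ)⁻¹ * {y | ‖rescaledOffset r z y‖ < ρ}.indicator
        (fun y => |(fderiv ℝ (rescaledOffset r z) y).det| * φ (rescaledOffset r z y)) x := by
  have hc : 0 < 1 - K * ρ := sub_pos.2 hKρ
  by_cases hxρ : ‖rescaledOffset r z x‖ < ρ
  · rw [indicator_of_mem (show x ∈ {y | ‖rescaledOffset r z y‖ < ρ} from hxρ), ← mul_assoc]
    gcongr
    · exact hφ0 _
    rw [inv_mul_eq_div, le_div_iff₀ hc]
    exact (inv_pow_mul_le_det_fderiv_rescaledOffset hr hrx hx hxρ).trans (le_abs_self _)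
  · rw [hφρ _ (not_lt.1 hxρ), mul_zero]
    exact mul_nonneg (inv_nonneg.2 hc.le)
      (indicator_nonneg (fun y _ => mul_nonneg (abs_nonneg _) (hφ0 _)) x)

theorem setIntegral_inv_pow_mul_comp_rescaledOffset_le [FiniteDimensional ℝ E] [MeasurableSpace E]
    [BorelSpace E] (μ : Measure E) [μ.IsAddHaarMeasure] {r : E → ℝ} {K : ℝ≥0}
    (hr : LipschitzWith K r) {s : Set E} (hs : MeasurableSet s) (hrs : ∀ x ∈ s, 0 < r x) {ρ : ℝ}
    (hKρ : K * ρ < 1) {φ : E → ℝ} (hφ : Integrable φ μ) (hφ0 : ∀ x, 0 ≤ φ x)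
    (hφρ : ∀ x, ρ ≤ ‖x‖ → φ x = 0) (z : E) :
    ∫ x in s, (r x ^ finrank ℝ E)⁻¹ * φ (rescaledOffset r z x) ∂μ ≤
      (1 - K * ρ)⁻¹ * ∫ x, φ x ∂μ := by
  set T := rescaledOffset r z
  set D := s ∩ {x | DifferentiableAt ℝ r x}
  set S := D ∩ {x | ‖T x‖ < ρ}
  set g := fun x => |(fderiv ℝ T x).det| * φ (T x)
  have hT : Measurable T := hr.continuous.measurable.inv.smul (measurable_id.sub_const z)
  have hSm : MeasurableSet S :=
    (hs.inter (measurableSet_of_differentiableAt ℝ r)).inter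
      (measurableSet_lt hT.norm measurable_const)
  have hderiv : ∀ x ∈ S, HasFDerivWithinAt T (fderiv ℝ T x) S x := fun x hx =>
    (hasFDerivAt_rescaledOffset z hx.1.2.hasFDerivAt (hrs x hx.1.1).ne').differentiableAt
      |>.hasFDerivAt.hasFDerivWithinAt
  have hinj : InjOn T S := by
    refine (injOn_rescaledOffset hr hKρ z).mono ?_
    rintro x ⟨⟨hxs, -⟩, hxρ⟩
    exact ⟨(hrs x hxs).ne', hxρ⟩
  have hg : IntegrableOn g S μ :=
    (integrableOn_image_iff_integrableOn_abs_det_fderiv_smul μ hSm hderiv hinj φ).1 hφ.integrableOn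
  have hpt : ∀ᵐ x ∂μ.restrict s,
      (r x ^ finrank ℝ E)⁻¹ * φ (T x) ≤ (1 - K * ρ)⁻¹ * S.indicator g x := by
    rw [ae_restrict_iff' hs]
    filter_upwards [hr.ae_differentiableAt (μ := μ)] with x hrx hxs
    rw [← indicator_indicator, indicator_of_mem (show x ∈ D from ⟨hxs, hrx⟩)]
    exact inv_pow_mul_comp_rescaledOffset_le hr hKρ hφ0 hφρ hrx (hrs x hxs)
  calc ∫ x in s, (r x ^ finrank ℝ E)⁻¹ * φ (T x) ∂μ
      ≤ ∫ x in s, (1 - K * ρ)⁻¹ * S.indicator g x ∂μ :=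
        integral_mono_of_nonneg
          (ae_restrict_of_forall_mem hs fun x hx => mul_nonneg (by have := hrs x hx; positivity) (hφ0 _))
          ((hg.integrable_indicator hSm).restrict.const_mul _) hpt
    _ = (1 - K * ρ)⁻¹ * ∫ y in T '' S, φ y ∂μ := by
        rw [integral_const_mul, setIntegral_indicator hSm, inter_eq_right.2 fun x hx => hx.1.1,
          integral_image_eq_integral_abs_det_fderiv_smul μ hSm hderiv hinj]
        rfl
    _ ≤ (1 - K * ρ)⁻¹ * ∫ y, φ y ∂μ :=
        mul_le_mul_of_nonneg_left (setIntegral_le_integral hφ (Filter.Eventually.of_forall hφ0))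
          (inv_nonneg.2 (sub_pos.2 hKρ).le)

end RescaledOffset

theorem stmt_4_general (Ω : Set (EuclideanSpace ℝ (Fin 3))) (hopen : IsOpen Ω)
    (hbdd : Bornology.IsBounded Ω) (σ : ℝ) (hσ0 : 0 < σ) (hσ1 : σ < 1 / Real.sqrt 3)
    (φ : EuclideanSpace ℝ (Fin 3) → ℝ) (hφ0 : ∀ x, 0 ≤ φ x)
    (hφsupp : ∀ x, 2 / 3 ≤ ‖x‖ → φ x = 0) (hφ1 : ∫ x, φ x = 1) :
    ∀ z ∈ Ω,
      ∫ x in Ω,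
          ((σ * Metric.infDist x Ωᶜ) ^ 3)⁻¹ *
            φ ((σ * Metric.infDist x Ωᶜ)⁻¹ • (x - z)) ≤
        1 / (1 - Real.sqrt 3 * σ) := by
  intro z _
  have hΩc : Ωᶜ.Nonempty :=
    nonempty_compl.2 fun h => NormedSpace.unbounded_univ ℝ _ (h ▸ hbdd)
  have hr : LipschitzWith (‖σ‖₊ * 1) fun x => σ * Metric.infDist x Ωᶜ :=
    (lipschitzWith_smul σ).comp (Metric.lipschitz_infDist_pt Ωᶜ)
  have hrΩ : ∀ x ∈ Ω, 0 < σ * Metric.infDist x Ωᶜ := fun x hx =>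
    mul_pos hσ0 ((hopen.isClosed_compl.notMem_iff_infDist_pos hΩc).1 (not_not_intro hx))
  have hσ3 : Real.sqrt 3 * σ < 1 := by
    rwa [lt_div_iff₀ (by positivity), mul_comm] at hσ1
  have h23 : (2 / 3 : ℝ) ≤ Real.sqrt 3 := by
    rw [Real.le_sqrt] <;> norm_num
  have hKρ : ((‖σ‖₊ * 1 : ℝ≥0) : ℝ) * (2 / 3) < 1 := by
    simp only [coe_nnnorm, Real.norm_eq_abs, abs_of_pos hσ0, mul_one]
    nlinarith
  have key := setIntegral_inv_pow_mul_comp_rescaledOffset_le volume hr hopen.measurableSet hrΩ hKρ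
    (Integrable.of_integral_ne_zero (hφ1 ▸ one_ne_zero)) hφ0 hφsupp z
  rw [finrank_euclideanSpace_fin, hφ1] at key
  refine key.trans ?_
  simp only [coe_nnnorm, Real.norm_eq_abs, abs_of_pos hσ0, mul_one, one_div]
  exact inv_anti₀ (by linarith) (by nlinarith)

/-- Uniform bound for the variable-scale mollifier: for `Ω ⊂ ℝ³` nonempty bounded open,
`σ ∈ (0, 1/√3)`, `r(x) = σ·dist(x, Ωᶜ)`, and `φ ≥ 0` measurable, vanishing for `|x| ≥ 2/3`
and with `∫ φ = 1`, one has, for every `z ∈ Ω`,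
`∫_Ω r(x)⁻³ φ((x−z)/r(x)) dx ≤ 1/(1 − √3 σ)`. -/
theorem stmt_4 (Ω : Set (EuclideanSpace ℝ (Fin 3))) (hne : Ω.Nonempty) (hopen : IsOpen Ω)
    (hbdd : Bornology.IsBounded Ω) (σ : ℝ) (hσ0 : 0 < σ) (hσ1 : σ < 1 / Real.sqrt 3)
    (φ : EuclideanSpace ℝ (Fin 3) → ℝ) (hφm : Measurable φ) (hφ0 : ∀ x, 0 ≤ φ x)
    (hφsupp : ∀ x, 2 / 3 ≤ ‖x‖ → φ x = 0) (hφ1 : ∫ x, φ x = 1) :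
    ∀ z ∈ Ω,
      ∫ x in Ω,
          ((σ * Metric.infDist x Ωᶜ) ^ 3)⁻¹ *
            φ ((σ * Metric.infDist x Ωᶜ)⁻¹ • (x - z)) ≤
        1 / (1 - Real.sqrt 3 * σ) :=
  stmt_4_general Ω hopen hbdd σ hσ0 hσ1 φ hφ0 hφsupp hφ1
end

section
/- Let Ω ⊂ ℝ³ be a nonempty bounded open set, let σ ∈ (0, 1/√3), and set r(x) = σ · dist(x, Ωᶜ) for x ∈ Ω. Let φ : ℝ³ → ℝ be a nonnegative measurable function with φ(x) = 0 whenever |x| ≥ 2/3 and ∫_{ℝ³} φ(x) dx = 1. Then for every f ∈ L²(Ω), ∫_Ω ∫_Ω r(x)⁻³ φ((x − z)/r(x)) f(z)² dz dx ≤ (1/(1 − √3 σ)) ∫_Ω f(z)² dz. -/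
/-!
Fix `z`. In polar coordinates `x = z + ρ • ω` the scale `R ρ = r (z + ρ • ω)` is `σ`-Lipschitz
in `ρ`, and the integrand vanishes unless `ρ < a * R ρ`. On that set `t = ρ / R ρ` is strictly
increasing with `dt/dρ ≥ (1 - a σ) / R ρ` wherever `R` is differentiable, i.e. almost everywhere
by Rademacher, so substituting `t` bounds every ray integral by
`(1 - a σ)⁻¹ ∫ tⁿ⁻¹ φ (t • ω) dt`. Hence `∫ r(x)⁻ⁿ φ((x - z) / r(x)) dx ≤ (1 - a σ)⁻¹ ∫ φ`
uniformly in `z`, and Tonelli turns this into the `L²` bound; here `a = 2/3 < √3`.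
-/

open MeasureTheory Set
open scoped ENNReal NNReal

theorem strictMonoOn_div_of_lipschitzWith {R : ℝ → ℝ} {σ : ℝ≥0} (hR : LipschitzWith σ R)
    {a : ℝ} (haσ : a * σ < 1) :
    StrictMonoOn (fun ρ => ρ / R ρ) {ρ | 0 < ρ ∧ 0 < R ρ ∧ ρ < a * R ρ} := by
  rintro ρ₁ ⟨hρ₁, hR₁, ha₁⟩ ρ₂ ⟨-, hR₂, -⟩ h12
  have hlip : R ρ₂ - R ρ₁ ≤ σ * (ρ₂ - ρ₁) := by
    have := hR.dist_le_mul ρ₂ ρ₁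
    rw [Real.dist_eq, Real.dist_eq, abs_of_pos (sub_pos.2 h12)] at this
    exact (le_abs_self _).trans this
  have hσρ : ρ₁ * σ < R ρ₁ := by nlinarith [mul_le_mul_of_nonneg_right ha₁.le σ.2]
  rw [div_lt_div_iff₀ hR₁ hR₂]
  nlinarith [mul_le_mul_of_nonneg_left hlip hρ₁.le, mul_lt_mul_of_pos_right hσρ (sub_pos.2 h12)]

theorem inv_le_mul_abs_deriv_div_of_lipschitzWith {R : ℝ → ℝ} {σ : ℝ≥0} (hR : LipschitzWith σ R)
    {a ρ : ℝ} (haσ : a * σ < 1) (hρ : 0 < ρ) (hRρ : 0 < R ρ) (haρ : ρ < a * R ρ) :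
    (R ρ)⁻¹ ≤ (1 - a * σ)⁻¹ * |(R ρ - ρ * deriv R ρ) / R ρ ^ 2| := by
  have hderiv : deriv R ρ ≤ σ := (le_abs_self _).trans (norm_deriv_le_of_lipschitz hR)
  have key : (1 - a * σ) * R ρ ≤ R ρ - ρ * deriv R ρ := by
    nlinarith [mul_le_mul_of_nonneg_left hderiv hρ.le, mul_le_mul_of_nonneg_right haρ.le σ.2]
  have h1 : 0 < 1 - a * σ := by linarith
  rw [abs_of_pos (div_pos (lt_of_lt_of_le (mul_pos h1 hRρ) key) (by positivity)),
    ← div_eq_inv_mul, le_div_iff₀ h1, le_div_iff₀ (by positivity)]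
  calc (R ρ)⁻¹ * (1 - a * σ) * R ρ ^ 2 = (1 - a * σ) * R ρ := by field_simp
    _ ≤ _ := key

theorem lintegral_Ioi_inv_mul_comp_div_le {R : ℝ → ℝ} {σ : ℝ≥0} (hR : LipschitzWith σ R)
    {a : ℝ} (haσ : a * σ < 1) (H : ℝ → ℝ≥0∞) (hH : ∀ t, a ≤ t → H t = 0) :
    ∫⁻ ρ in Ioi 0, ENNReal.ofReal (R ρ)⁻¹ * H (ρ / R ρ) ≤
      ENNReal.ofReal (1 - a * σ)⁻¹ * ∫⁻ t in Ioi 0, H t := by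
  set s : ℝ → ℝ := fun ρ => ρ / R ρ
  set s' : ℝ → ℝ := fun ρ => (R ρ - ρ * deriv R ρ) / R ρ ^ 2
  set F : ℝ → ℝ≥0∞ := fun ρ => ENNReal.ofReal (R ρ)⁻¹ * H (s ρ)
  set V : Set ℝ := {ρ | 0 < ρ ∧ 0 < R ρ ∧ ρ < a * R ρ} ∩ {ρ | DifferentiableAt ℝ R ρ}
  have hRc := hR.continuous
  have hV : MeasurableSet V :=
    ((measurableSet_lt measurable_const measurable_id).inter
      ((measurableSet_lt measurable_const hRc.measurable).inter
        (measurableSet_lt measurable_id (hRc.measurable.const_mul a)))).inter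
      (measurableSet_of_differentiableAt ℝ R)
  have hs' : ∀ ρ ∈ V, HasDerivWithinAt s (s' ρ) V ρ := fun ρ hρ => by
    have := ((hasDerivAt_id' ρ).div hρ.2.hasDerivAt hρ.1.2.1.ne').hasDerivWithinAt (s := V)
    rwa [one_mul] at this
  have hsupp : ∀ᵐ ρ ∂volume.restrict (Ioi 0), F ρ ≤ V.indicator F ρ := by
    filter_upwards [ae_restrict_mem measurableSet_Ioi,
      ae_restrict_of_ae hR.ae_differentiableAt] with ρ (hρ : 0 < ρ) hdiff
    dsimp only [F]
    by_cases hRρ : 0 < R ρ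
    · by_cases haρ : ρ < a * R ρ
      · rw [indicator_of_mem (show ρ ∈ V from ⟨⟨hρ, hRρ, haρ⟩, hdiff⟩)]
      · rw [hH _ ((le_div_iff₀ hRρ).2 (not_lt.1 haρ)), mul_zero]
        exact zero_le
    · rw [ENNReal.ofReal_of_nonpos (inv_nonpos.2 (not_lt.1 hRρ)), zero_mul]
      exact zero_le
  calc ∫⁻ ρ in Ioi 0, F ρ ≤ ∫⁻ ρ in Ioi 0, V.indicator F ρ := lintegral_mono_ae hsupp
    _ ≤ ∫⁻ ρ in V, F ρ :=
        (setLIntegral_le_lintegral _ _).trans (lintegral_indicator hV _).le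
    _ ≤ ∫⁻ ρ in V, ENNReal.ofReal (1 - a * σ)⁻¹ * (ENNReal.ofReal |s' ρ| * H (s ρ)) := by
        refine setLIntegral_mono' hV fun ρ hρ => ?_
        dsimp only [F]
        rw [← mul_assoc, ← ENNReal.ofReal_mul (inv_nonneg.2 (by linarith))]
        gcongr
        exact inv_le_mul_abs_deriv_div_of_lipschitzWith hR haσ hρ.1.1 hρ.1.2.1 hρ.1.2.2
    _ = ENNReal.ofReal (1 - a * σ)⁻¹ * ∫⁻ t in s '' V, H t := by
        rw [lintegral_const_mul' _ _ ENNReal.ofReal_ne_top,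
          lintegral_image_eq_lintegral_abs_deriv_mul hV hs'
            ((strictMonoOn_div_of_lipschitzWith hR haσ).injOn.mono inter_subset_left)]
    _ ≤ ENNReal.ofReal (1 - a * σ)⁻¹ * ∫⁻ t in Ioi 0, H t := by
        gcongr
        rintro _ ⟨ρ, hρ, rfl⟩
        exact div_pos hρ.1.1 hρ.1.2.1

theorem lintegral_Ioi_pow_mul_inv_pow_mul_comp_div_le {R : ℝ → ℝ} (hR0 : ∀ ρ, 0 ≤ R ρ)
    {σ : ℝ≥0} (hR : LipschitzWith σ R) {a : ℝ} (haσ : a * σ < 1) {n : ℕ} (hn : n ≠ 0)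
    (g : ℝ → ℝ) (hg : ∀ t, a ≤ t → g t = 0) :
    ∫⁻ ρ in Ioi 0, ENNReal.ofReal (ρ ^ (n - 1)) * ENNReal.ofReal ((R ρ ^ n)⁻¹ * g (ρ / R ρ)) ≤
      ENNReal.ofReal (1 - a * σ)⁻¹ *
        ∫⁻ t in Ioi 0, ENNReal.ofReal (t ^ (n - 1)) * ENNReal.ofReal (g t) := by
  refine le_of_eq_of_le (setLIntegral_congr_fun measurableSet_Ioi fun ρ (hρ : 0 < ρ) => ?_)
    (lintegral_Ioi_inv_mul_comp_div_le hR haσ _ fun t ht => by simp [hg t ht])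
  obtain hRρ | hRρ := (hR0 ρ).eq_or_lt
  · simp [← hRρ, hn]
  · obtain ⟨m, rfl⟩ := Nat.exists_eq_succ_of_ne_zero hn
    rw [← ENNReal.ofReal_mul (by positivity), ← mul_assoc, ← ENNReal.ofReal_mul (by positivity),
      ← ENNReal.ofReal_mul (by positivity)]
    congr 1
    rw [Nat.succ_sub_one, div_pow, pow_succ]
    field_simp

theorem lintegral_eq_lintegral_toSphere_lintegral_Ioi {E : Type*} [NormedAddCommGroup E]
    [NormedSpace ℝ E] [FiniteDimensional ℝ E] [MeasurableSpace E] [BorelSpace E] [Nontrivial E]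
    (μ : Measure E) [μ.IsAddHaarMeasure] {F : E → ℝ≥0∞} (hF : Measurable F) :
    ∫⁻ x, F x ∂μ = ∫⁻ ω : Metric.sphere (0 : E) 1, (∫⁻ ρ in Ioi (0 : ℝ),
        ENNReal.ofReal (ρ ^ (Module.finrank ℝ E - 1)) * F (ρ • (ω : E))) ∂μ.toSphere := by
  set G : Metric.sphere (0 : E) 1 × Ioi (0 : ℝ) → ℝ≥0∞ := fun p => F ((p.2 : ℝ) • (p.1 : E))
  have hG : Measurable G := hF.comp (by fun_prop)
  calc ∫⁻ x, F x ∂μ = ∫⁻ x : ({0}ᶜ : Set E), F x ∂μ.comap Subtype.val := by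
        rw [lintegral_subtype_comap (measurableSet_singleton 0).compl, restrict_compl_singleton]
    _ = ∫⁻ x : ({0}ᶜ : Set E), G (homeomorphUnitSphereProd E x) ∂μ.comap Subtype.val := by
        refine lintegral_congr fun x => ?_
        simp [G, smul_inv_smul₀ (norm_ne_zero_iff.2 x.2)]
    _ = ∫⁻ p, G p ∂(μ.toSphere.prod (Measure.volumeIoiPow (Module.finrank ℝ E - 1))) :=
        μ.measurePreserving_homeomorphUnitSphereProd.lintegral_comp hG
    _ = _ := by
        rw [lintegral_prod _ hG.aemeasurable]
        refine lintegral_congr fun ω => ?_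
        rw [Measure.volumeIoiPow, lintegral_withDensity_eq_lintegral_mul_non_measurable _
          (by fun_prop) (ae_of_all _ fun _ => ENNReal.ofReal_lt_top),
          ← lintegral_subtype_comap measurableSet_Ioi]
        rfl

theorem lintegral_inv_pow_mul_comp_smul_sub_le {E : Type*} [NormedAddCommGroup E]
    [NormedSpace ℝ E] [FiniteDimensional ℝ E] [MeasurableSpace E] [BorelSpace E] [Nontrivial E]
    (μ : Measure E) [μ.IsAddHaarMeasure] {r : E → ℝ} (hr0 : ∀ x, 0 ≤ r x) {σ : ℝ≥0}
    (hr : LipschitzWith σ r) {a : ℝ} (haσ : a * σ < 1) {φ : E → ℝ} (hφ : Measurable φ)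
    (hφa : ∀ x, a ≤ ‖x‖ → φ x = 0) (z : E) :
    ∫⁻ x, ENNReal.ofReal ((r x ^ Module.finrank ℝ E)⁻¹ * φ ((r x)⁻¹ • (x - z))) ∂μ ≤
      ENNReal.ofReal (1 - a * σ)⁻¹ * ∫⁻ y, ENNReal.ofReal (φ y) ∂μ := by
  set n := Module.finrank ℝ E
  set K : E → ℝ≥0∞ := fun x => ENNReal.ofReal ((r x ^ n)⁻¹ * φ ((r x)⁻¹ • (x - z)))
  have hK : Measurable K := by
    have := hr.continuous.measurable
    fun_prop
  have hray : ∀ ω : Metric.sphere (0 : E) 1,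
      ∫⁻ ρ in Ioi (0 : ℝ), ENNReal.ofReal (ρ ^ (n - 1)) * K (ρ • (ω : E) + z) ≤
        ENNReal.ofReal (1 - a * σ)⁻¹ * ∫⁻ t in Ioi (0 : ℝ),
          ENNReal.ofReal (t ^ (n - 1)) * ENNReal.ofReal (φ (t • (ω : E))) := by
    intro ω
    have hω : ‖(ω : E)‖ = 1 := by simp
    have hline : LipschitzWith 1 (fun ρ : ℝ => ρ • (ω : E) + z) :=
      LipschitzWith.of_dist_le_mul fun ρ₁ ρ₂ => by
        rw [dist_add_right, dist_eq_norm, ← sub_smul, norm_smul, hω, mul_one, NNReal.coe_one,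
          one_mul, Real.dist_eq, Real.norm_eq_abs]
    have hR : LipschitzWith σ fun ρ : ℝ => r (ρ • (ω : E) + z) := by
      simpa [Function.comp_def] using hr.comp hline
    have hg : ∀ t : ℝ, a ≤ t → φ (t • (ω : E)) = 0 := fun t ht => hφa _ <| by
      rw [norm_smul, hω, mul_one, Real.norm_eq_abs]
      exact ht.trans (le_abs_self t)
    simpa [K, smul_smul, div_eq_inv_mul] using lintegral_Ioi_pow_mul_inv_pow_mul_comp_div_le
      (fun ρ => hr0 _) hR haσ (Module.finrank_pos (R := ℝ) (M := E)).ne' _ hg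
  calc ∫⁻ x, K x ∂μ = ∫⁻ y, K (y + z) ∂μ := (lintegral_add_right_eq_self K z).symm
    _ = ∫⁻ ω : Metric.sphere (0 : E) 1, (∫⁻ ρ in Ioi (0 : ℝ),
          ENNReal.ofReal (ρ ^ (n - 1)) * K (ρ • (ω : E) + z)) ∂μ.toSphere :=
        lintegral_eq_lintegral_toSphere_lintegral_Ioi μ (hK.comp (measurable_add_const z))
    _ ≤ ∫⁻ ω : Metric.sphere (0 : E) 1, ENNReal.ofReal (1 - a * σ)⁻¹ * (∫⁻ t in Ioi (0 : ℝ),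
          ENNReal.ofReal (t ^ (n - 1)) * ENNReal.ofReal (φ (t • (ω : E)))) ∂μ.toSphere :=
        lintegral_mono hray
    _ = ENNReal.ofReal (1 - a * σ)⁻¹ * ∫⁻ y, ENNReal.ofReal (φ y) ∂μ := by
        rw [lintegral_const_mul' _ _ ENNReal.ofReal_ne_top,
          lintegral_eq_lintegral_toSphere_lintegral_Ioi μ hφ.ennreal_ofReal]

theorem integral_integral_mul_le_of_lintegral_le {α β : Type*} [MeasurableSpace α]
    [MeasurableSpace β] {μ : Measure α} {ν : Measure β} [SFinite μ] [SFinite ν]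
    {k : α → β → ℝ} (hk : AEMeasurable (Function.uncurry k) (μ.prod ν)) (hk0 : ∀ x y, 0 ≤ k x y)
    {q : β → ℝ} (hq : Integrable q ν) (hq0 : ∀ y, 0 ≤ q y) {C : ℝ} (hC : 0 ≤ C)
    (hkC : ∀ᵐ y ∂ν, ∫⁻ x, ENNReal.ofReal (k x y) ∂μ ≤ ENNReal.ofReal C) :
    ∫ x, ∫ y, k x y * q y ∂ν ∂μ ≤ C * ∫ y, q y ∂ν := by
  have hkq : AEMeasurable (Function.uncurry fun x y => ENNReal.ofReal (k x y * q y)) (μ.prod ν) :=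
    (hk.mul hq.aemeasurable.comp_snd).ennreal_ofReal
  rw [← ENNReal.ofReal_le_ofReal_iff (mul_nonneg hC (integral_nonneg hq0))]
  calc ENNReal.ofReal (∫ x, ∫ y, k x y * q y ∂ν ∂μ)
      ≤ ∫⁻ x, ∫⁻ y, ENNReal.ofReal (k x y * q y) ∂ν ∂μ := by
        refine (Real.ofReal_le_enorm _).trans <| (enorm_integral_le_lintegral_enorm _).trans <|
          lintegral_mono fun x => (enorm_integral_le_lintegral_enorm _).trans_eq ?_
        exact lintegral_congr fun y => Real.enorm_eq_ofReal (mul_nonneg (hk0 x y) (hq0 y))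
    _ = ∫⁻ y, (∫⁻ x, ENNReal.ofReal (k x y) ∂μ) * ENNReal.ofReal (q y) ∂ν := by
        rw [lintegral_lintegral_swap hkq]
        refine lintegral_congr fun y => ?_
        simp_rw [ENNReal.ofReal_mul (hk0 _ y)]
        exact lintegral_mul_const' _ _ ENNReal.ofReal_ne_top
    _ ≤ ∫⁻ y, ENNReal.ofReal C * ENNReal.ofReal (q y) ∂ν :=
        lintegral_mono_ae (hkC.mono fun y hy => by gcongr)
    _ = ENNReal.ofReal (C * ∫ y, q y ∂ν) := by
        rw [lintegral_const_mul' _ _ ENNReal.ofReal_ne_top,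
          ← ofReal_integral_eq_lintegral_ofReal hq (ae_of_all _ hq0), ENNReal.ofReal_mul hC]

theorem stmt_5_general (Ω : Set (EuclideanSpace ℝ (Fin 3))) (σ : ℝ) (hσ0 : 0 < σ)
    (hσ1 : σ < 1 / Real.sqrt 3)
    (φ : EuclideanSpace ℝ (Fin 3) → ℝ) (hφm : Measurable φ) (hφ0 : ∀ x, 0 ≤ φ x)
    (hφsupp : ∀ x, 2 / 3 ≤ ‖x‖ → φ x = 0) (hφ1 : ∫ x, φ x = 1)
    (f : EuclideanSpace ℝ (Fin 3) → ℝ) (hf : MemLp f 2 (volume.restrict Ω)) :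
    ∫ x in Ω, ∫ z in Ω,
        ((σ * Metric.infDist x Ωᶜ) ^ 3)⁻¹ *
          φ ((σ * Metric.infDist x Ωᶜ)⁻¹ • (x - z)) * (f z) ^ 2 ≤
      (1 / (1 - Real.sqrt 3 * σ)) * ∫ z in Ω, (f z) ^ 2 := by
  have hr0 : ∀ x, 0 ≤ σ * Metric.infDist x Ωᶜ := fun x => mul_nonneg hσ0.le Metric.infDist_nonneg
  have hr : LipschitzWith ‖σ‖₊ fun x => σ * Metric.infDist x Ωᶜ := by
    simpa [Function.comp_def] using (lipschitzWith_smul σ).comp (Metric.lipschitz_infDist_pt Ωᶜ)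
  have hσ : 2 / 3 * (‖σ‖₊ : ℝ) < 1 ∧ (1 - 2 / 3 * (‖σ‖₊ : ℝ))⁻¹ ≤ 1 / (1 - Real.sqrt 3 * σ) := by
    have h23 : 2 / 3 < Real.sqrt 3 := by rw [Real.lt_sqrt] <;> norm_num
    have h3σ : Real.sqrt 3 * σ < 1 := by rwa [lt_div_iff₀' (by positivity)] at hσ1
    rw [coe_nnnorm, Real.norm_of_nonneg hσ0.le, one_div]
    exact ⟨by nlinarith, inv_anti₀ (by linarith) (by nlinarith)⟩
  have hφi : ∫⁻ y, ENNReal.ofReal (φ y) = 1 := by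
    rw [← ofReal_integral_eq_lintegral_ofReal (.of_integral_ne_zero (by simp [hφ1]))
      (ae_of_all _ hφ0), hφ1, ENNReal.ofReal_one]
  have hk0 : ∀ x z : EuclideanSpace ℝ (Fin 3),
      0 ≤ ((σ * Metric.infDist x Ωᶜ) ^ 3)⁻¹ * φ ((σ * Metric.infDist x Ωᶜ)⁻¹ • (x - z)) :=
    fun x z => mul_nonneg (inv_nonneg.2 (pow_nonneg (hr0 x) 3)) (hφ0 _)
  refine integral_integral_mul_le_of_lintegral_le (q := fun z => f z ^ 2) (by fun_prop) hk0
    hf.integrable_sq (fun z => sq_nonneg _) ((inv_nonneg.2 (by linarith [hσ.1])).trans hσ.2)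
    (ae_of_all _ fun z => ?_)
  have hkernel := lintegral_inv_pow_mul_comp_smul_sub_le volume hr0 hr hσ.1 hφm hφsupp z
  rw [finrank_euclideanSpace_fin, hφi, mul_one] at hkernel
  exact (setLIntegral_le_lintegral _ _).trans (hkernel.trans (ENNReal.ofReal_le_ofReal hσ.2))

/-- L² boundedness of convolution with the variable-scale mollifier, with constant independent
of the domain: for `Ω ⊂ ℝ³` nonempty bounded open, `σ ∈ (0, 1/√3)`, `r(x) = σ·dist(x, Ωᶜ)`,
and `φ ≥ 0` measurable, vanishing for `|x| ≥ 2/3` and with `∫ φ = 1`, one has, for every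
`f ∈ L²(Ω)`,
`∫_Ω ∫_Ω r(x)⁻³ φ((x−z)/r(x)) f(z)² dz dx ≤ (1/(1 − √3 σ)) ∫_Ω f(z)² dz`. -/
theorem stmt_5 (Ω : Set (EuclideanSpace ℝ (Fin 3))) (hne : Ω.Nonempty) (hopen : IsOpen Ω)
    (hbdd : Bornology.IsBounded Ω) (σ : ℝ) (hσ0 : 0 < σ) (hσ1 : σ < 1 / Real.sqrt 3)
    (φ : EuclideanSpace ℝ (Fin 3) → ℝ) (hφm : Measurable φ) (hφ0 : ∀ x, 0 ≤ φ x)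
    (hφsupp : ∀ x, 2 / 3 ≤ ‖x‖ → φ x = 0) (hφ1 : ∫ x, φ x = 1)
    (f : EuclideanSpace ℝ (Fin 3) → ℝ) (hf : MemLp f 2 (volume.restrict Ω)) :
    ∫ x in Ω, ∫ z in Ω,
        ((σ * Metric.infDist x Ωᶜ) ^ 3)⁻¹ *
          φ ((σ * Metric.infDist x Ωᶜ)⁻¹ • (x - z)) * (f z) ^ 2 ≤
      (1 / (1 - Real.sqrt 3 * σ)) * ∫ z in Ω, (f z) ^ 2 :=
  stmt_5_general Ω σ hσ0 hσ1 φ hφm hφ0 hφsupp hφ1 f hf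
end

section
/- Let Ω ⊂ ℝ³ be a nonempty open set with nonempty complement, let σ ∈ (0,1), let z ∈ Ω, set r(x) = σ · dist(x, Ωᶜ), and let Ω(z) = {x ∈ Ω : |x − z| < r(x)}. Then the map ψ : Ω(z) → ℝ³ defined by ψ(x) = (x − z)/r(x) is injective on Ω(z) (and maps Ω(z) into the open unit ball B(0,1)). -/
open MeasureTheory

/-- Injectivity of the variable-scale rescaling map: for `Ω ⊂ ℝ³` open nonempty with nonempty
complement, `σ ∈ (0,1)`, `z ∈ Ω`, `r(x) = σ·dist(x, Ωᶜ)`, and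
`Ω(z) = {x ∈ Ω : |x − z| < r(x)}`, the map `ψ(x) = (x − z)/r(x)` is injective on `Ω(z)` and
maps `Ω(z)` into the open unit ball `B(0,1)`. -/
theorem stmt_6 (Ω : Set (EuclideanSpace ℝ (Fin 3))) (hne : Ω.Nonempty) (hopen : IsOpen Ω)
    (hcne : Ωᶜ.Nonempty) (σ : ℝ) (hσ0 : 0 < σ) (hσ1 : σ < 1) (z : EuclideanSpace ℝ (Fin 3))
    (hz : z ∈ Ω) :
    Set.InjOn (fun x => (σ * Metric.infDist x Ωᶜ)⁻¹ • (x - z))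
        {x ∈ Ω | ‖x - z‖ < σ * Metric.infDist x Ωᶜ} ∧
      Set.MapsTo (fun x => (σ * Metric.infDist x Ωᶜ)⁻¹ • (x - z))
        {x ∈ Ω | ‖x - z‖ < σ * Metric.infDist x Ωᶜ}
        (Metric.ball (0 : EuclideanSpace ℝ (Fin 3)) 1) := by
  have hrpos : ∀ x ∈ Ω, 0 < σ * Metric.infDist x Ωᶜ := by
    intro x hx
    have h0 : 0 < Metric.infDist x Ωᶜ := by
      rw [← hopen.isClosed_compl.notMem_iff_infDist_pos hcne]
      simpa using hx
    positivity
  have hlip : ∀ x y : EuclideanSpace ℝ (Fin 3),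
      |σ * Metric.infDist x Ωᶜ - σ * Metric.infDist y Ωᶜ| ≤ σ * ‖x - y‖ := by
    intro x y
    rw [← mul_sub, abs_mul, abs_of_pos hσ0]
    have h1 := Metric.infDist_le_infDist_add_dist (x := x) (y := y) (s := Ωᶜ)
    have h2 := Metric.infDist_le_infDist_add_dist (x := y) (y := x) (s := Ωᶜ)
    rw [dist_eq_norm] at h1 h2
    have hxy : ‖y - x‖ = ‖x - y‖ := by rw [← norm_neg]; congr 1; abel
    have habs : |Metric.infDist x Ωᶜ - Metric.infDist y Ωᶜ| ≤ ‖x - y‖ :=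
      abs_le.2 ⟨by linarith, by linarith⟩
    exact mul_le_mul_of_nonneg_left habs hσ0.le
  constructor
  · intro x hx y hy heq
    dsimp only at heq
    set a := σ * Metric.infDist x Ωᶜ with ha
    set b := σ * Metric.infDist y Ωᶜ with hb
    have hapos := hrpos x hx.1
    have hbpos := hrpos y hy.1
    set v := a⁻¹ • (x - z) with hv
    have hxz : x - z = a • v := by rw [hv, smul_smul, mul_inv_cancel₀ hapos.ne', one_smul]
    have hyz : y - z = b • v := by
      rw [heq]; rw [smul_smul, mul_inv_cancel₀ hbpos.ne', one_smul]
    have hvlt : ‖v‖ < 1 := by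
      rw [hv, norm_smul, norm_inv, Real.norm_of_nonneg hapos.le]
      rw [inv_mul_lt_iff₀ hapos, mul_one]
      exact hx.2
    have hxy : x - y = (a - b) • v := by
      have : x - y = (x - z) - (y - z) := by abel
      rw [this, hxz, hyz, ← sub_smul]
    by_contra hne'
    have hpos : 0 < ‖x - y‖ := by
      rw [norm_pos_iff]; exact sub_ne_zero_of_ne hne'
    have : ‖x - y‖ ≤ σ * ‖x - y‖ * ‖v‖ := by
      calc ‖x - y‖ = |a - b| * ‖v‖ := by rw [hxy, norm_smul, Real.norm_eq_abs]
        _ ≤ σ * ‖x - y‖ * ‖v‖ := mul_le_mul_of_nonneg_right (hlip x y) (norm_nonneg _)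
    have hsv : σ * ‖v‖ < 1 := by nlinarith [norm_nonneg v]
    nlinarith
  · intro x hx
    have hapos := hrpos x hx.1
    simp only [Metric.mem_ball, dist_zero_right]
    rw [norm_smul, norm_inv, Real.norm_of_nonneg hapos.le, inv_mul_lt_iff₀ hapos, mul_one]
    exact hx.2
end

section
/- For every a > 0 and every function f : ℝ → ℝ that is continuously differentiable on a neighborhood of [−a, a], one has ∫_{−a}^{a} f(t)² dt ≤ 5 ∫_{−a/2}^{a/2} f(t)² dt + 4 ∫_{−a}^{a} r(t)² f′(t)² dt, where r(t) = t + a for t ∈ (−a, 0) and r(t) = a − t for t ∈ [0, a) (i.e., r(t) = a − |t|). -/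
/-!
On `[0, a]`, integrating `((a - t) f²)'` over `[a/2, a]` and `(t f²)'` over `[0, a/2]` expresses
`∫_{a/2}^a f²` and `∫_0^{a/2} f²` through the common boundary term `(a/2) f(a/2)²` plus
integrals of `2 w f f'` with `|w t| ≤ a - |t|`; the latter are absorbed by
`2xy ≤ x²/2 + 2y²`. This gives `∫_0^a f² ≤ 4 ∫_0^{a/2} f² + 4 ∫_0^a (a - |t|)² f'²`, and
reflecting `t ↦ -t` handles `[-a, 0]`.
-/

open MeasureTheory intervalIntegral Set

theorem integral_sq_eq_of_hasDerivAt {f f' : ℝ → ℝ} {b c : ℝ}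
    (hf : ∀ t ∈ uIcc b c, HasDerivAt f (f' t) t) (hf' : ContinuousOn f' (uIcc b c)) :
    ∫ t in b..c, f t ^ 2 = (c - b) * f b ^ 2 + ∫ t in b..c, 2 * (c - t) * f t * f' t := by
  have hfc : ContinuousOn f (uIcc b c) := fun t ht => (hf t ht).continuousAt.continuousWithinAt
  have hsq : IntervalIntegrable (fun t => f t ^ 2) volume b c := (hfc.pow 2).intervalIntegrable
  have hmix : IntervalIntegrable (fun t => 2 * (c - t) * f t * f' t) volume b c :=
    (((continuousOn_const.mul (continuousOn_const.sub continuousOn_id)).mul hfc).mul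
      hf').intervalIntegrable
  have hderiv : ∀ t ∈ uIcc b c, HasDerivAt (fun t => (c - t) * f t ^ 2)
      (2 * (c - t) * f t * f' t - f t ^ 2) t := fun t ht =>
    (((hasDerivAt_id t).const_sub c).mul ((hf t ht).pow 2)).congr_deriv
      (by simp only [id_eq, Pi.pow_apply]; ring)
  have hftc := integral_eq_sub_of_hasDerivAt hderiv (hmix.sub hsq)
  rw [integral_sub hmix hsq] at hftc
  linarith

theorem abs_integral_two_mul_le {f g w v : ℝ → ℝ} {b c : ℝ} (hbc : b ≤ c)
    (hf : ContinuousOn f (Icc b c)) (hg : ContinuousOn g (Icc b c))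
    (hv : ContinuousOn v (Icc b c)) (hwv : ∀ t ∈ Icc b c, |w t| ≤ v t) :
    |∫ t in b..c, 2 * w t * f t * g t| ≤
      (∫ t in b..c, f t ^ 2) / 2 + 2 * ∫ t in b..c, v t ^ 2 * g t ^ 2 := by
  have hf2 : IntervalIntegrable (fun t => f t ^ 2) volume b c :=
    (hf.pow 2).intervalIntegrable_of_Icc hbc
  have hvg : IntervalIntegrable (fun t => v t ^ 2 * g t ^ 2) volume b c :=
    ((hv.pow 2).mul (hg.pow 2)).intervalIntegrable_of_Icc hbc
  have hbound : ∀ t ∈ Icc b c,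
      |2 * w t * f t * g t| ≤ f t ^ 2 / 2 + 2 * (v t ^ 2 * g t ^ 2) := by
    intro t ht
    have hwg : |w t| * |g t| ≤ v t * |g t| :=
      mul_le_mul_of_nonneg_right (hwv t ht) (abs_nonneg _)
    rw [abs_mul, abs_mul, abs_mul, abs_two, ← sq_abs (f t), ← sq_abs (g t)]
    nlinarith [sq_nonneg (|f t| - 2 * v t * |g t|), abs_nonneg (f t)]
  calc |∫ t in b..c, 2 * w t * f t * g t|
      ≤ ∫ t in b..c, (f t ^ 2 / 2 + 2 * (v t ^ 2 * g t ^ 2)) := by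
        rw [← Real.norm_eq_abs]
        exact norm_integral_le_of_norm_le hbc
          (ae_of_all _ fun t ht => hbound t (Ioc_subset_Icc_self ht))
          ((hf2.div_const 2).add (hvg.const_mul 2))
    _ = (∫ t in b..c, f t ^ 2) / 2 + 2 * ∫ t in b..c, v t ^ 2 * g t ^ 2 := by
        rw [integral_add (hf2.div_const 2) (hvg.const_mul 2), intervalIntegral.integral_div,
          intervalIntegral.integral_const_mul]

theorem integral_sq_le_of_hasDerivAt_Icc_zero {f f' : ℝ → ℝ} {a : ℝ} (ha : 0 ≤ a)
    (hf : ∀ t ∈ Icc 0 a, HasDerivAt f (f' t) t) (hf' : ContinuousOn f' (Icc 0 a)) :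
    ∫ t in (0 : ℝ)..a, f t ^ 2 ≤
      4 * (∫ t in (0 : ℝ)..a / 2, f t ^ 2) + 4 * ∫ t in (0 : ℝ)..a, (a - |t|) ^ 2 * f' t ^ 2 := by
  have hfc : ContinuousOn f (Icc 0 a) := fun t ht => (hf t ht).continuousAt.continuousWithinAt
  have hlow : Icc 0 (a / 2) ⊆ Icc 0 a := Icc_subset_Icc le_rfl (by linarith)
  have hupp : Icc (a / 2) a ⊆ Icc 0 a := Icc_subset_Icc (by linarith) le_rfl
  have hweight : ContinuousOn (fun t : ℝ => a - |t|) (Icc 0 a) := by fun_prop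
  have houter := integral_sq_eq_of_hasDerivAt (b := a / 2) (c := a)
    (fun t ht => hf t (hupp (by rwa [uIcc_of_le (by linarith)] at ht)))
    (hf'.mono (by rw [uIcc_of_le (by linarith)]; exact hupp))
  have hinner := integral_sq_eq_of_hasDerivAt (b := a / 2) (c := 0)
    (fun t ht => hf t (hlow (by rwa [uIcc_of_ge (by linarith)] at ht)))
    (hf'.mono (by rw [uIcc_of_ge (by linarith)]; exact hlow))
  rw [integral_symm 0 (a / 2), integral_symm 0 (a / 2)] at hinner
  have bound_outer := abs_integral_two_mul_le (w := fun t => a - t) (by linarith)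
    (hfc.mono hupp) (hf'.mono hupp) (hweight.mono hupp)
    (fun t ht => by rw [abs_of_nonneg (by linarith [ht.2]), abs_of_nonneg (by linarith [ht.1])])
  have bound_inner := abs_integral_two_mul_le (w := fun t => 0 - t) (by linarith)
    (hfc.mono hlow) (hf'.mono hlow) (hweight.mono hlow)
    (fun t ht => by rw [zero_sub, abs_neg, abs_of_nonneg ht.1]; linarith [ht.2])
  have hf2 : IntervalIntegrable (fun t => f t ^ 2) volume 0 a :=
    (hfc.pow 2).intervalIntegrable_of_Icc ha
  have hw2 : IntervalIntegrable (fun t => (a - |t|) ^ 2 * f' t ^ 2) volume 0 a :=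
    ((hweight.pow 2).mul (hf'.pow 2)).intervalIntegrable_of_Icc ha
  have hmid : a / 2 ∈ uIcc 0 a := by rw [uIcc_of_le ha]; constructor <;> linarith
  rw [← integral_add_adjacent_intervals (hf2.mono_set (uIcc_subset_uIcc_left hmid))
    (hf2.mono_set (uIcc_subset_uIcc_right hmid))]
  rw [← integral_add_adjacent_intervals (hw2.mono_set (uIcc_subset_uIcc_left hmid))
    (hw2.mono_set (uIcc_subset_uIcc_right hmid))]
  linarith [abs_le.1 bound_outer, abs_le.1 bound_inner]

theorem integral_neg_self_eq_add_comp_neg {g : ℝ → ℝ} {c : ℝ}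
    (hg : IntervalIntegrable g volume (-c) c) :
    ∫ t in (-c)..c, g t = (∫ t in (0 : ℝ)..c, g t) + ∫ t in (0 : ℝ)..c, g (-t) := by
  have hzero : (0 : ℝ) ∈ uIcc (-c) c := by
    rcases le_total 0 c with hc | hc
    · rw [uIcc_of_le (by linarith)]; constructor <;> linarith
    · rw [uIcc_of_ge (by linarith)]; constructor <;> linarith
  rw [← integral_add_adjacent_intervals (hg.mono_set (uIcc_subset_uIcc_left hzero))
    (hg.mono_set (uIcc_subset_uIcc_right hzero)), integral_comp_neg, neg_zero, add_comm]

/-- One-dimensional weighted Poincaré-type inequality: for every `a > 0` and every `f : ℝ → ℝ`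
continuously differentiable on a neighborhood of `[-a, a]`,
`∫_{-a}^{a} f² ≤ 5 ∫_{-a/2}^{a/2} f² + 4 ∫_{-a}^{a} (a - |t|)² f'(t)² dt`,
where `r(t) = a - |t|` (i.e. `r(t) = t + a` on `(-a,0)` and `r(t) = a - t` on `[0,a)`). -/
theorem stmt_8 (a : ℝ) (ha : 0 < a) (f : ℝ → ℝ)
    (hf : ∃ U : Set ℝ, IsOpen U ∧ Set.Icc (-a) a ⊆ U ∧ ContDiffOn ℝ 1 f U) :
    ∫ t in (-a)..a, (f t) ^ 2 ≤
      5 * (∫ t in (-a/2)..(a/2), (f t) ^ 2) +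
        4 * ∫ t in (-a)..a, (a - |t|) ^ 2 * (deriv f t) ^ 2 := by
  obtain ⟨U, hU, hsub, hfU⟩ := hf
  have hd : ∀ t ∈ Icc (-a) a, HasDerivAt f (deriv f t) t := fun t ht =>
    ((hfU.differentiableOn one_ne_zero).differentiableAt (hU.mem_nhds (hsub ht))).hasDerivAt
  have hd' : ContinuousOn (deriv f) (Icc (-a) a) :=
    (hfU.continuousOn_deriv_of_isOpen hU le_rfl).mono hsub
  have hfc : ContinuousOn f (Icc (-a) a) := fun t ht => (hd t ht).continuousAt.continuousWithinAt
  have hnonneg : Icc 0 a ⊆ Icc (-a) a := Icc_subset_Icc (by linarith) le_rfl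
  have hneg : ∀ t ∈ Icc 0 a, -t ∈ Icc (-a) a := fun t ht =>
    ⟨by linarith [ht.2], by linarith [ht.1]⟩
  have hright := integral_sq_le_of_hasDerivAt_Icc_zero ha.le (fun t ht => hd t (hnonneg ht))
    (hd'.mono hnonneg)
  have hleft := integral_sq_le_of_hasDerivAt_Icc_zero (f := fun t => f (-t)) ha.le
    (fun t ht => ((hd (-t) (hneg t ht)).comp t (hasDerivAt_neg t)).congr_deriv (mul_neg_one _))
    (hd'.comp continuous_neg.continuousOn hneg).neg
  have hf2 : IntervalIntegrable (fun t => f t ^ 2) volume (-a) a :=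
    (hfc.pow 2).intervalIntegrable_of_Icc (by linarith)
  have hhalf : uIcc (-(a / 2)) (a / 2) ⊆ uIcc (-a) a := by
    rw [uIcc_of_le (by linarith), uIcc_of_le (by linarith)]
    exact Icc_subset_Icc (by linarith) (by linarith)
  have hw2 : IntervalIntegrable (fun t => (a - |t|) ^ 2 * deriv f t ^ 2) volume (-a) a :=
    (((continuousOn_const.sub continuousOn_id.abs).pow 2).mul
      (hd'.pow 2)).intervalIntegrable_of_Icc (by linarith)
  rw [neg_div, integral_neg_self_eq_add_comp_neg hf2,
    integral_neg_self_eq_add_comp_neg (hf2.mono_set hhalf), integral_neg_self_eq_add_comp_neg hw2]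
  simp only [abs_neg, neg_sq] at hleft ⊢
  have hsq_nonneg : ∀ g : ℝ → ℝ, 0 ≤ ∫ t in (0 : ℝ)..a / 2, g t ^ 2 := fun g =>
    integral_nonneg (by linarith) fun t _ => sq_nonneg (g t)
  linarith [hsq_nonneg f, hsq_nonneg fun t => f (-t)]
end

section
/- For every a > 0, every function f : ℝ → ℝ that is continuously differentiable on a neighborhood of [−a, a], and every x ∈ (−a, a], one has ∫_{−a}^{x} f(t)² dt ≤ 2 (x + a) f(x)² + 4 ∫_{−a}^{x} (t + a)² f′(t)² dt. -/
open MeasureTheory intervalIntegral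

/-!
Integrating `((t + a) f(t)²)' = f² + 2 (t + a) f f'` over `[-a, x]` expresses `∫ f²` as
`(x + a) f(x)² - ∫ 2 (t + a) f f'`. Young's inequality `-2 (t + a) f f' ≤ f² / 2 + 2 (t + a)² f'²`
bounds the last term by half of `∫ f²` plus `2 ∫ (t + a)² f'²`; absorbing the half gives the claim.
-/

theorem integral_sq_le_mul_sq_add_integral_weighted_deriv_sq {f f' : ℝ → ℝ} {c x : ℝ}
    (hcx : c ≤ x) (hf : ∀ t ∈ Set.Icc c x, HasDerivAt f (f' t) t)
    (hf' : ContinuousOn f' (Set.Icc c x)) :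
    ∫ t in c..x, f t ^ 2 ≤
      2 * (x - c) * f x ^ 2 + 4 * ∫ t in c..x, (t - c) ^ 2 * f' t ^ 2 := by
  rw [← Set.uIcc_of_le hcx] at hf hf'
  have hfc : ContinuousOn f (Set.uIcc c x) := HasDerivAt.continuousOn hf
  have hsq : IntervalIntegrable (fun t => f t ^ 2) volume c x := (hfc.pow 2).intervalIntegrable
  have hweighted : IntervalIntegrable (fun t => (t - c) ^ 2 * f' t ^ 2) volume c x :=
    (((continuousOn_id.sub continuousOn_const).pow 2).mul (hf'.pow 2)).intervalIntegrable
  have hmul : IntervalIntegrable (fun t => 2 * (t - c) * f t * f' t) volume c x :=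
    (((continuousOn_const.mul (continuousOn_id.sub continuousOn_const)).mul hfc).mul
      hf').intervalIntegrable
  have hparts :
      (∫ t in c..x, f t ^ 2) + ∫ t in c..x, 2 * (t - c) * f t * f' t = (x - c) * f x ^ 2 := by
    rw [← integral_add hsq hmul,
      integral_eq_sub_of_hasDerivAt (f := fun t => (t - c) * f t ^ 2) _ (hsq.add hmul)]
    · simp
    · intro t ht
      refine (((hasDerivAt_id' t).sub_const c).fun_mul ((hf t ht).fun_pow 2)).congr_deriv ?_
      push_cast
      ring
  have hyoung : ∫ t in c..x, -(2 * (t - c) * f t * f' t) ≤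
      ∫ t in c..x, (f t ^ 2 / 2 + 2 * ((t - c) ^ 2 * f' t ^ 2)) :=
    integral_mono_on hcx hmul.neg ((hsq.div_const 2).add (hweighted.const_mul 2)) fun t _ => by
      nlinarith [sq_nonneg (f t + 2 * (t - c) * f' t)]
  rw [intervalIntegral.integral_neg, integral_add (hsq.div_const 2) (hweighted.const_mul 2),
    intervalIntegral.integral_div, intervalIntegral.integral_const_mul] at hyoung
  linarith

theorem stmt_9_general (a : ℝ) (f : ℝ → ℝ)
    (hf : ∃ U : Set ℝ, IsOpen U ∧ Set.Icc (-a) a ⊆ U ∧ ContDiffOn ℝ 1 f U)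
    (x : ℝ) (hx : x ∈ Set.Ioc (-a) a) :
    ∫ t in (-a)..x, (f t) ^ 2 ≤
      2 * (x + a) * (f x) ^ 2 + 4 * ∫ t in (-a)..x, (t + a) ^ 2 * (deriv f t) ^ 2 := by
  obtain ⟨U, hU, hsub, hfU⟩ := hf
  have hIcc : Set.Icc (-a) x ⊆ U := (Set.Icc_subset_Icc_right hx.2).trans hsub
  have hderiv (t : ℝ) (ht : t ∈ Set.Icc (-a) x) : HasDerivAt f (deriv f t) t :=
    ((hfU.differentiableOn one_ne_zero).differentiableAt (hU.mem_nhds (hIcc ht))).hasDerivAt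
  have hcont : ContinuousOn (deriv f) (Set.Icc (-a) x) :=
    (hfU.continuousOn_deriv_of_isOpen hU le_rfl).mono hIcc
  simpa only [sub_neg_eq_add] using
    integral_sq_le_mul_sq_add_integral_weighted_deriv_sq hx.1.le hderiv hcont

/-- For every `a > 0`, every `f : ℝ → ℝ` continuously differentiable on a neighborhood of
`[-a, a]`, and every `x ∈ (-a, a]`, one has
`∫_{-a}^{x} f(t)² dt ≤ 2 (x + a) f(x)² + 4 ∫_{-a}^{x} (t + a)² f'(t)² dt`. -/
theorem stmt_9 (a : ℝ) (ha : 0 < a) (f : ℝ → ℝ)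
    (hf : ∃ U : Set ℝ, IsOpen U ∧ Set.Icc (-a) a ⊆ U ∧ ContDiffOn ℝ 1 f U)
    (x : ℝ) (hx : x ∈ Set.Ioc (-a) a) :
    ∫ t in (-a)..x, (f t) ^ 2 ≤
      2 * (x + a) * (f x) ^ 2 + 4 * ∫ t in (-a)..x, (t + a) ^ 2 * (deriv f t) ^ 2 :=
  stmt_9_general a f hf x hx
end

section
/- For every a > 0, every function f : ℝ → ℝ that is continuously differentiable on a neighborhood of [−a, a], and every s ∈ (−a, a), one has f(s)² ≤ a⁻¹ ∫_{−a}^{a} f(t)² dt + 4a ∫_{−a}^{a} f′(t)² dt. -/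
open MeasureTheory intervalIntegral Set
open scoped Interval

/-!
Pick a point `t` where `f t ^ 2` equals the mean of `f ^ 2` over `[a, b]`. By the fundamental
theorem of calculus, `f s ^ 2 - f t ^ 2 = ∫_t^s 2 f f'`, and `|2 f f'| ≤ c⁻¹ f ² + c f' ²` for any
`c > 0`. On `[-a, a]`, `c = 2a` makes the two coefficients of `∫ f ²` add up to `a⁻¹`, and leaves
`2a` (rather than `4a`) in front of `∫ f' ²`.
-/

theorem sub_le_integral_abs_of_hasDerivAt {g g' : ℝ → ℝ} {a b s t : ℝ} (hab : a ≤ b)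
    (hg : ∀ x ∈ Icc a b, HasDerivAt g (g' x) x) (hg' : IntervalIntegrable g' volume a b)
    (hs : s ∈ Icc a b) (ht : t ∈ Icc a b) :
    g s - g t ≤ ∫ x in a..b, |g' x| := by
  have hsub : uIcc t s ⊆ uIcc a b := by
    rw [uIcc_of_le hab]
    exact uIcc_subset_Icc ht hs
  rw [← uIcc_of_le hab] at hg
  calc g s - g t = ∫ x in t..s, g' x :=
        (integral_eq_sub_of_hasDerivAt (fun x hx => hg x (hsub hx)) (hg'.mono_set hsub)).symm
    _ ≤ |∫ x in t..s, g' x| := le_abs_self _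
    _ ≤ ∫ x in Ι t s, |g' x| := by
        simpa only [Real.norm_eq_abs] using
          norm_integral_le_integral_norm_uIoc (f := g') (μ := volume) (a := t) (b := s)
    _ ≤ ∫ x in Ι a b, |g' x| :=
        setIntegral_mono_set hg'.def'.abs (ae_of_all _ fun _ => abs_nonneg _)
          (uIoc_subset_uIoc_of_uIcc_subset_uIcc hsub).eventuallyLE
    _ = ∫ x in a..b, |g' x| := by rw [uIoc_of_le hab, integral_of_le hab]

theorem abs_two_mul_le_inv_mul_sq_add_mul_sq {c : ℝ} (hc : 0 < c) (x y : ℝ) :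
    |2 * x * y| ≤ c⁻¹ * x ^ 2 + c * y ^ 2 := by
  have hsub : c⁻¹ * x ^ 2 + c * y ^ 2 - 2 * x * y = c⁻¹ * (x - c * y) ^ 2 := by
    field_simp; ring
  have hadd : c⁻¹ * x ^ 2 + c * y ^ 2 + 2 * x * y = c⁻¹ * (x + c * y) ^ 2 := by
    field_simp; ring
  have hsub_nonneg : 0 ≤ c⁻¹ * (x - c * y) ^ 2 := by positivity
  have hadd_nonneg : 0 ≤ c⁻¹ * (x + c * y) ^ 2 := by positivity
  rw [abs_le]
  constructor <;> linarith

theorem sq_le_mul_integral_sq_add_mul_integral_deriv_sq {f f' : ℝ → ℝ} {a b c s : ℝ}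
    (hab : a < b) (hc : 0 < c) (hf : ∀ x ∈ Icc a b, HasDerivAt f (f' x) x)
    (hf' : ContinuousOn f' (Icc a b)) (hs : s ∈ Icc a b) :
    f s ^ 2 ≤ ((b - a)⁻¹ + c⁻¹) * (∫ x in a..b, f x ^ 2) + c * ∫ x in a..b, f' x ^ 2 := by
  have hfc : ContinuousOn f (Icc a b) := fun x hx => (hf x hx).continuousAt.continuousWithinAt
  have hint : ∀ {g : ℝ → ℝ}, ContinuousOn g (Icc a b) → IntervalIntegrable g volume a b :=
    fun hg => ContinuousOn.intervalIntegrable (by rwa [uIcc_of_le hab.le])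
  obtain ⟨t, ht, hft⟩ := exists_eq_interval_average (f := fun x => f x ^ 2) hab.ne
    (by rw [uIcc_of_le hab.le]; exact hfc.pow 2)
  rw [interval_average_eq, smul_eq_mul] at hft
  have hf2 : IntervalIntegrable (fun x => f x ^ 2) volume a b := hint (hfc.pow 2)
  have hf'2 : IntervalIntegrable (fun x => f' x ^ 2) volume a b := hint (hf'.pow 2)
  have hderiv : ∀ x ∈ Icc a b, HasDerivAt (fun x => f x ^ 2) (2 * f x * f' x) x := fun x hx => by
    simpa [mul_comm, mul_assoc, mul_left_comm] using (hf x hx).fun_pow 2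
  have hftc := sub_le_integral_abs_of_hasDerivAt hab.le hderiv
    (hint ((continuousOn_const.mul hfc).mul hf')) hs
    (by rw [uIoo_of_le hab.le] at ht; exact Ioo_subset_Icc_self ht)
  have hamgm : ∫ x in a..b, |2 * f x * f' x| ≤ ∫ x in a..b, c⁻¹ * f x ^ 2 + c * f' x ^ 2 :=
    integral_mono_on hab.le (hint ((continuousOn_const.mul hfc).mul hf').abs)
      ((hf2.const_mul _).add (hf'2.const_mul _))
      fun x _ => abs_two_mul_le_inv_mul_sq_add_mul_sq hc _ _
  rw [integral_add (hf2.const_mul _) (hf'2.const_mul _),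
    intervalIntegral.integral_const_mul, intervalIntegral.integral_const_mul] at hamgm
  linarith

/-- One-dimensional pointwise bound by the H¹-norm: for every `a > 0`, every `f : ℝ → ℝ`
continuously differentiable on a neighborhood of `[-a, a]`, and every `s ∈ (-a, a)`,
`f(s)² ≤ a⁻¹ ∫_{-a}^{a} f(t)² dt + 4a ∫_{-a}^{a} f'(t)² dt`. -/
theorem stmt_10 (a : ℝ) (ha : 0 < a) (f : ℝ → ℝ)
    (hf : ∃ U : Set ℝ, IsOpen U ∧ Set.Icc (-a) a ⊆ U ∧ ContDiffOn ℝ 1 f U)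
    (s : ℝ) (hs : s ∈ Set.Ioo (-a) a) :
    (f s) ^ 2 ≤ a⁻¹ * (∫ t in (-a)..a, (f t) ^ 2) + 4 * a * ∫ t in (-a)..a, (deriv f t) ^ 2 := by
  obtain ⟨U, hU, hIU, hfU⟩ := hf
  have hderiv : ∀ x ∈ Icc (-a) a, HasDerivAt f (deriv f x) x := fun x hx =>
    ((hfU.contDiffAt (hU.mem_nhds (hIU hx))).differentiableAt one_ne_zero).hasDerivAt
  have hbound := sq_le_mul_integral_sq_add_mul_integral_deriv_sq (c := 2 * a) (by linarith)
    (by linarith) hderiv ((hfU.continuousOn_deriv_of_isOpen hU le_rfl).mono hIU)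
    (Ioo_subset_Icc_self hs)
  have hcoeff : (a - -a)⁻¹ + (2 * a)⁻¹ = a⁻¹ := by field_simp; ring
  have hnonneg : 0 ≤ ∫ t in (-a)..a, deriv f t ^ 2 :=
    integral_nonneg (by linarith) fun _ _ => sq_nonneg _
  rw [hcoeff] at hbound
  linarith [mul_nonneg ha.le hnonneg]
end

section
/- For every 3×3 real matrix B with det B > 0, one has dist(B, SO(3)) ≤ √3 |BᵀB − I|; equivalently, writing B = A + I and Φ(A) = sym A + (1/2)AᵀA, one has dist(A + I, SO(3)) ≤ 2√3 |Φ(A)| whenever det(A + I) > 0. -/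
open Matrix

/-- The Frobenius norm of a 3×3 real matrix. -/
noncomputable def frob (M : Matrix (Fin 3) (Fin 3) ℝ) : ℝ :=
  Real.sqrt (∑ i, ∑ j, (M i j) ^ 2)

/-- The special orthogonal group SO(3) as a set of 3×3 real matrices. -/
def SO3 : Set (Matrix (Fin 3) (Fin 3) ℝ) :=
  {R | Rᵀ * R = 1 ∧ R.det = 1}

/-- The (Frobenius) distance from a 3×3 matrix to SO(3). -/
noncomputable def distSO3 (B : Matrix (Fin 3) (Fin 3) ℝ) : ℝ :=
  sInf ((fun R => frob (B - R)) '' SO3)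

/-- The symmetric part of a matrix. -/
noncomputable def symPart (A : Matrix (Fin 3) (Fin 3) ℝ) : Matrix (Fin 3) (Fin 3) ℝ :=
  (1 / 2 : ℝ) • (A + Aᵀ)

/-- The nonlinear strain tensor `Φ(A) = sym A + (1/2) Aᵀ A`. -/
noncomputable def Phi (A : Matrix (Fin 3) (Fin 3) ℝ) : Matrix (Fin 3) (Fin 3) ℝ :=
  symPart A + (1 / 2 : ℝ) • (Aᵀ * A)

/-!
Write `B = R U` (polar decomposition) with `R ∈ SO(3)` and `U = √(BᵀB)` positive semidefinite;
`det B > 0` is what makes `det R = 1` rather than `-1`. Then `|B - R| = |U - 1|`, and since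
`U + 1 ≥ 1`, `|U - 1| ≤ |(U + 1)(U - 1)| = |BᵀB - 1|`. This gives the estimate even with
constant `1` in place of `√3`, and `(A + 1)ᵀ(A + 1) - 1 = 2 Φ(A)` turns it into the second form.
-/

open scoped Matrix.Norms.Frobenius MatrixOrder

namespace Matrix

theorem PosSemidef.transpose_eq {m : Type*} {U : Matrix m m ℝ} (hU : U.PosSemidef) : Uᵀ = U :=
  (isHermitian_iff_isSymm.mp hU.isHermitian).eq

variable {m n : Type*} [Fintype m] [Fintype n]

theorem frobenius_norm_sq_eq_trace (M : Matrix m n ℝ) : ‖M‖ ^ 2 = (Mᵀ * M).trace := by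
  rw [frobenius_norm_def, ← Real.sqrt_eq_rpow, Real.sq_sqrt (by positivity), trace,
    Finset.sum_comm]
  simp [mul_apply, sq]

theorem frobenius_norm_orthogonal_mul [DecidableEq m] {R : Matrix m m ℝ} (hR : Rᵀ * R = 1)
    (X : Matrix m n ℝ) : ‖R * X‖ = ‖X‖ := by
  have h : ‖R * X‖ ^ 2 = ‖X‖ ^ 2 := by
    rw [frobenius_norm_sq_eq_trace, frobenius_norm_sq_eq_trace, transpose_mul, Matrix.mul_assoc,
      ← Matrix.mul_assoc Rᵀ, hR, Matrix.one_mul]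
  exact (pow_left_inj₀ (norm_nonneg _) (norm_nonneg _) two_ne_zero).mp h

theorem PosSemidef.frobenius_norm_le_add_one_mul [DecidableEq m] {U : Matrix m m ℝ}
    (hU : U.PosSemidef) (Z : Matrix m n ℝ) : ‖Z‖ ≤ ‖(U + 1) * Z‖ := by
  have hcross : 0 ≤ (Zᵀ * U * Z).trace := by
    simpa [conjTranspose_eq_transpose_of_trivial] using
      (hU.conjTranspose_mul_mul_same Z).trace_nonneg
  have hexpand : ‖(U + 1) * Z‖ ^ 2 = ‖U * Z‖ ^ 2 + 2 * (Zᵀ * U * Z).trace + ‖Z‖ ^ 2 := by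
    simp only [Matrix.add_mul, Matrix.one_mul, frobenius_norm_sq_eq_trace, transpose_add,
      transpose_mul, hU.transpose_eq, Matrix.mul_add, trace_add, Matrix.mul_assoc]
    ring
  refine (pow_le_pow_iff_left₀ (norm_nonneg _) (norm_nonneg _) two_ne_zero).mp ?_
  nlinarith [sq_nonneg ‖U * Z‖]

theorem exists_orthogonal_mul_posSemidef [DecidableEq n] {B : Matrix n n ℝ} (hB : 0 < B.det) :
    ∃ R U : Matrix n n ℝ, Rᵀ * R = 1 ∧ R.det = 1 ∧ U.PosSemidef ∧ B = R * U := by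
  have hBB : (Bᵀ * B).PosSemidef := by
    simpa [conjTranspose_eq_transpose_of_trivial] using posSemidef_conjTranspose_mul_self B
  set U := CFC.sqrt (Bᵀ * B)
  have hU : U.PosSemidef := (CFC.sqrt_nonneg _).posSemidef
  have hUU : U * U = Bᵀ * B := CFC.sqrt_mul_sqrt_self _ hBB.nonneg
  have hdetU : 0 < U.det := by
    have h : U.det * U.det = B.det * B.det := by
      simpa [det_mul, det_transpose] using congrArg det hUU
    nlinarith [hU.det_nonneg]
  have hUinv : U⁻¹ * U = 1 := nonsing_inv_mul U (isUnit_iff_ne_zero.mpr hdetU.ne')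
  have hUinv' : U * U⁻¹ = 1 := mul_nonsing_inv U (isUnit_iff_ne_zero.mpr hdetU.ne')
  have horth : (B * U⁻¹)ᵀ * (B * U⁻¹) = 1 := by
    rw [transpose_mul, transpose_nonsing_inv, hU.transpose_eq, mul_assoc, ← mul_assoc Bᵀ,
      ← hUU, ← mul_assoc, ← mul_assoc, hUinv, one_mul, hUinv']
  have hdet_pos : 0 < (B * U⁻¹).det := by
    rw [det_mul, det_nonsing_inv, Ring.inverse_eq_inv']
    positivity
  have hdet_sq : (B * U⁻¹).det * (B * U⁻¹).det = 1 := by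
    simpa only [det_mul, det_transpose, det_one] using congrArg det horth
  refine ⟨B * U⁻¹, U, horth, by nlinarith, hU, by rw [mul_assoc, hUinv, mul_one]⟩

theorem exists_specialOrthogonal_norm_sub_le [DecidableEq n] {B : Matrix n n ℝ}
    (hB : 0 < B.det) : ∃ R : Matrix n n ℝ, Rᵀ * R = 1 ∧ R.det = 1 ∧ ‖B - R‖ ≤ ‖Bᵀ * B - 1‖ := by
  obtain ⟨R, U, hR, hdet, hU, rfl⟩ := exists_orthogonal_mul_posSemidef hB
  refine ⟨R, hR, hdet, ?_⟩
  calc ‖R * U - R‖ = ‖R * (U - 1)‖ := by rw [mul_sub, mul_one]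
    _ = ‖U - 1‖ := frobenius_norm_orthogonal_mul hR _
    _ ≤ ‖(U + 1) * (U - 1)‖ := hU.frobenius_norm_le_add_one_mul _
    _ = ‖(R * U)ᵀ * (R * U) - 1‖ := by
      rw [transpose_mul, mul_assoc, ← mul_assoc Rᵀ, hR, one_mul, hU.transpose_eq]
      congr 1
      noncomm_ring

end Matrix

theorem frob_eq_norm (M : Matrix (Fin 3) (Fin 3) ℝ) : frob M = ‖M‖ := by
  simp [frob, frobenius_norm_def, Real.sqrt_eq_rpow]

theorem distSO3_le_frob_transpose_mul_self_sub_one {B : Matrix (Fin 3) (Fin 3) ℝ}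
    (hB : 0 < B.det) : distSO3 B ≤ frob (Bᵀ * B - 1) := by
  obtain ⟨R, hR, hdet, hle⟩ := exists_specialOrthogonal_norm_sub_le hB
  have hbdd : BddBelow ((fun R => frob (B - R)) '' SO3) := by
    refine ⟨0, ?_⟩
    rintro _ ⟨S, -, rfl⟩
    exact Real.sqrt_nonneg _
  refine (csInf_le hbdd ⟨R, ⟨hR, hdet⟩, rfl⟩).trans ?_
  simpa only [frob_eq_norm] using hle

theorem transpose_add_one_mul_add_one_sub_one (A : Matrix (Fin 3) (Fin 3) ℝ) :
    (A + 1)ᵀ * (A + 1) - 1 = (2 : ℝ) • Phi A := by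
  rw [Phi, symPart, smul_add, smul_smul, smul_smul, transpose_add, transpose_one]
  norm_num
  noncomm_ring

/-- For every 3×3 real matrix `B` with `det B > 0`, `dist(B, SO(3)) ≤ √3 |BᵀB − I|`;
equivalently, writing `B = A + I`, `dist(A + I, SO(3)) ≤ 2√3 |Φ(A)|`
whenever `det(A + I) > 0`. -/
theorem stmt_13 :
    (∀ B : Matrix (Fin 3) (Fin 3) ℝ, 0 < B.det →
      distSO3 B ≤ Real.sqrt 3 * frob (Bᵀ * B - 1)) ∧
    (∀ A : Matrix (Fin 3) (Fin 3) ℝ, 0 < (A + 1).det →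
      distSO3 (A + 1) ≤ 2 * Real.sqrt 3 * frob (Phi A)) := by
  have hsqrt3 : (1 : ℝ) ≤ Real.sqrt 3 := Real.one_le_sqrt.mpr (by norm_num)
  have hB : ∀ B : Matrix (Fin 3) (Fin 3) ℝ, 0 < B.det →
      distSO3 B ≤ Real.sqrt 3 * frob (Bᵀ * B - 1) := fun B hB =>
    (distSO3_le_frob_transpose_mul_self_sub_one hB).trans
      (le_mul_of_one_le_left (Real.sqrt_nonneg _) hsqrt3)
  refine ⟨hB, fun A hA => ?_⟩
  calc distSO3 (A + 1) ≤ Real.sqrt 3 * frob ((A + 1)ᵀ * (A + 1) - 1) := hB _ hA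
    _ = 2 * Real.sqrt 3 * frob (Phi A) := by
      rw [transpose_add_one_mul_add_one_sub_one, frob_eq_norm, frob_eq_norm, norm_smul]
      norm_num
      ring
end
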